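/- arXiv:2603.03076 — 6 statements merged into one kernel-verified Lean document; each statement's English description precedes it below -/
import Mathlib

section
/- Let p : ℕ → (0,1) be a sequence with n·p(n) → ∞ and p(n)·(ln n)² → 0 as n → ∞. Then for all sufficiently large n, the largest k ∈ {1,…,n} with φ(n,k,p(n)) ≥ 1 equals either k₀(n) or k₀(n)+1. -/
/-! Write `L = ln (n q)`. Since `φ(k+1)/φ(k) ≤ e·n·q·e^{-q(k-1)} = e^{L+1-q(k-1)}`, once
`q(k-1) ≥ 3L/2` a value `φ(k) ≤ L` forces `φ(k+1) ≤ L·e^{1-L/2} < 1`. On the other hand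
`k̂ = ⌈3L/(2q)⌉` still has `φ(k̂) > L`: with `C(n,k) ≥ (n/2k)^k` and
`(1-q)^{k²/2} ≥ e^{-(1+O(q))qk²/2}`, `ln φ(k̂)` is of order `k̂·L/4`. So `k₀ ≥ k̂`,
and every `k > k₀` has `φ(k) ≤ L`, hence `φ(k+1) < 1`. -/

open Filter

/-- `phi n k p = C(n,k)·k^(k-2)·p^(k-1)·(1-p)^(k(k-1)/2-k+1)`, the expected number of
`k`-vertex induced trees in `G_{n,p}` (the exponent `k(k-1)/2 - k + 1` is written as
`k(k-1)/2 - (k-1)`, which agrees with it for every `k ≥ 1`, and `k^(k-2)` is the real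
power). -/
noncomputable def phi (n k : ℕ) (p : ℝ) : ℝ :=
  (n.choose k : ℝ) * (k : ℝ) ^ ((k : ℝ) - 2) * p ^ (k - 1) *
    (1 - p) ^ (k * (k - 1) / 2 - (k - 1))

/-- `kzero p n = max{k ∈ {1,…,n} : phi n k (p n) > ln (n·p n)}`. -/
noncomputable def kzero (p : ℕ → ℝ) (n : ℕ) : ℕ :=
  sSup {k : ℕ | 1 ≤ k ∧ k ≤ n ∧ Real.log (n * p n) < phi n k (p n)}


theorem Nat.sSup_eq_or_eq_succ_of_subset {A B : Set ℕ} (hB : BddAbove B) (hAB : A ⊆ B)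
    {a : ℕ} (ha : a ∈ A) (hstep : ∀ k, a < k → k ∉ A → k + 1 ∉ B) :
    sSup B = sSup A ∨ sSup B = sSup A + 1 := by
  have hA : BddAbove A := hB.mono hAB
  have hle : sSup A ≤ sSup B := csSup_le_csSup hB ⟨a, ha⟩ hAB
  have hb : sSup B ∈ B := Nat.sSup_mem ⟨a, hAB ha⟩ hB
  by_contra! hne
  have hlt : sSup A < sSup B - 1 := by omega
  refine hstep (sSup B - 1) ((le_csSup hA ha).trans_lt hlt) (notMem_of_csSup_lt hlt hA) ?_
  rwa [Nat.sub_add_cancel (by omega)]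

lemma Real.add_one_rpow_sub_two_le {x : ℝ} (hx : 0 < x) :
    (x + 1) ^ (x - 2) ≤ Real.exp 1 * x ^ (x - 2) := by
  rw [Real.rpow_def_of_pos (by linarith), Real.rpow_def_of_pos hx, ← Real.exp_add,
    Real.exp_le_exp]
  have hd : Real.log (x + 1) - Real.log x ≤ x⁻¹ := by
    rw [← Real.log_div (by linarith) hx.ne']
    linarith [Real.log_le_sub_one_of_pos (show 0 < (x + 1) / x by positivity),
      show (x + 1) / x = 1 + x⁻¹ by field_simp]
  have hd0 : 0 ≤ Real.log (x + 1) - Real.log x :=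
    sub_nonneg.2 (Real.log_le_log hx (by linarith))
  have hxd : x * (Real.log (x + 1) - Real.log x) ≤ 1 := by
    simpa [hx.ne'] using mul_le_mul_of_nonneg_left hd hx.le
  nlinarith

lemma Nat.succ_mul_div_two_sub {k : ℕ} (hk : 1 ≤ k) :
    (k + 1) * k / 2 - k = (k * (k - 1) / 2 - (k - 1)) + (k - 1) := by
  obtain ⟨j, rfl⟩ := Nat.exists_eq_add_of_le' hk
  have hsplit : (j + 1 + 1) * (j + 1) / 2 = (j + 1) * j / 2 + (j + 1) := by
    rw [show (j + 1 + 1) * (j + 1) = (j + 1) * j + (j + 1) * 2 by ring,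
      Nat.add_mul_div_right _ _ two_pos]
  have hj : j ≤ (j + 1) * j / 2 := by
    rw [Nat.le_div_iff_mul_le two_pos]; nlinarith [Nat.le_mul_self j]
  simp only [Nat.add_sub_cancel] at *
  omega

lemma one_sub_pow_le_exp {q : ℝ} (hq : q ≤ 1) (m : ℕ) :
    (1 - q) ^ m ≤ Real.exp (-(q * m)) := by
  calc (1 - q) ^ m ≤ Real.exp (-q) ^ m :=
        pow_le_pow_left₀ (by linarith) (by linarith [Real.add_one_le_exp (-q)]) m
    _ = Real.exp (-(q * m)) := by rw [← Real.exp_nat_mul]; ring_nf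

lemma phi_succ_le {n k : ℕ} (hk : 1 ≤ k) (hkn : k + 1 ≤ n) {q : ℝ} (hq0 : 0 < q)
    (hq1 : q < 1) :
    phi n (k + 1) q ≤ phi n k q * (n * Real.exp 1 * q * Real.exp (-(q * (k - 1)))) := by
  have hk0 : (0 : ℝ) < k + 1 := by positivity
  rw [← mul_le_mul_iff_of_pos_right hk0]
  have hchoose : (n.choose (k + 1) : ℝ) * (k + 1) = n.choose k * (n - k) := by
    have := congrArg (Nat.cast (R := ℝ)) (Nat.choose_succ_right_eq n k)
    push_cast [Nat.cast_sub (show k ≤ n by omega)] at this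
    linarith
  have hrpow : ((k + 1 : ℕ) : ℝ) ^ (((k + 1 : ℕ) : ℝ) - 2) =
      (k + 1) * (k + 1 : ℝ) ^ ((k : ℝ) - 2) := by
    push_cast
    rw [show (k : ℝ) + 1 - 2 = 1 + ((k : ℝ) - 2) by ring, Real.rpow_add hk0, Real.rpow_one]
  have hqpow : q ^ k = q ^ (k - 1) * q := by rw [← pow_succ, Nat.sub_add_cancel hk]
  have hexp : (1 - q) ^ ((k + 1) * k / 2 - k) =
      (1 - q) ^ (k * (k - 1) / 2 - (k - 1)) * (1 - q) ^ (k - 1) := by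
    rw [← pow_add, Nat.succ_mul_div_two_sub hk]
  have hdecay : (1 - q) ^ (k - 1) ≤ Real.exp (-(q * (k - 1))) := by
    simpa [Nat.cast_sub hk] using one_sub_pow_le_exp hq1.le (k - 1)
  calc phi n (k + 1) q * (k + 1)
      = (n.choose k * (n - k)) * (k + 1 : ℝ) ^ ((k : ℝ) - 2) * (q ^ (k - 1) * q) *
          ((1 - q) ^ (k * (k - 1) / 2 - (k - 1)) * (1 - q) ^ (k - 1)) * (k + 1) := by
        rw [phi, Nat.add_sub_cancel, hrpow, hqpow, hexp, ← hchoose]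
        ring
    _ ≤ (n.choose k * n) * (Real.exp 1 * (k : ℝ) ^ ((k : ℝ) - 2)) * (q ^ (k - 1) * q) *
          ((1 - q) ^ (k * (k - 1) / 2 - (k - 1)) * Real.exp (-(q * (k - 1)))) * (k + 1) := by
        have := Real.add_one_rpow_sub_two_le (x := k) (by positivity)
        have : (0 : ℝ) ≤ 1 - q := by linarith
        gcongr
        linarith [(Nat.cast_nonneg k : (0 : ℝ) ≤ k)]
    _ = phi n k q * (n * Real.exp 1 * q * Real.exp (-(q * (k - 1)))) * (k + 1) := by
        rw [phi]; ring

lemma Real.log_le_div_four_add_one {x : ℝ} (hx : 0 < x) : Real.log x ≤ x / 4 + 1 := by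
  have h4 := Real.log_le_sub_one_of_pos (show 0 < x / 4 by positivity)
  have h2 := Real.log_le_sub_one_of_pos two_pos
  rw [Real.log_div hx.ne' four_ne_zero, show (4 : ℝ) = 2 ^ 2 by norm_num, Real.log_pow] at h4
  push_cast at h4
  linarith

lemma phi_succ_lt_one {n k : ℕ} {q : ℝ} (hq0 : 0 < q) (hq1 : q < 1)
    (hL : 8 < Real.log (n * q)) (hk : 1 ≤ k) (hkn : k + 1 ≤ n)
    (hgap : 3 / 2 * Real.log (n * q) ≤ q * (k - 1)) (hphi : phi n k q ≤ Real.log (n * q)) :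
    phi n (k + 1) q < 1 := by
  set L := Real.log (n * q)
  have hn : (0 : ℝ) < n := by exact_mod_cast (show 0 < n by omega)
  have hnq : (n : ℝ) * q = Real.exp L := (Real.exp_log (by positivity)).symm
  have hfactor : (n : ℝ) * Real.exp 1 * q * Real.exp (-(q * (k - 1))) =
      Real.exp (L + 1 - q * (k - 1)) := by
    rw [show (n : ℝ) * Real.exp 1 * q * Real.exp (-(q * (k - 1))) =
        (n * q) * Real.exp 1 * Real.exp (-(q * (k - 1))) by ring, hnq, ← Real.exp_add,
      ← Real.exp_add]
    ring_nf
  have hlogL := Real.log_le_div_four_add_one (x := L) (by linarith)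
  calc phi n (k + 1) q ≤ phi n k q * Real.exp (L + 1 - q * (k - 1)) :=
        hfactor ▸ phi_succ_le hk hkn hq0 hq1
    _ ≤ L * Real.exp (L + 1 - q * (k - 1)) := by gcongr
    _ = Real.exp (Real.log L + (L + 1 - q * (k - 1))) := by
        rw [Real.exp_add, Real.exp_log (by linarith)]
    _ < 1 := Real.exp_lt_one_iff.2 (by linarith)

lemma Nat.half_pow_div_pow_le_choose {n k : ℕ} (hkn : 2 * k ≤ n) :
    ((n : ℝ) / 2) ^ k / (k : ℝ) ^ k ≤ n.choose k := by
  have hhalf : (n : ℝ) / 2 ≤ ((n + 1 - k : ℕ) : ℝ) := by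
    rw [div_le_iff₀ two_pos]; exact_mod_cast (show n ≤ (n + 1 - k) * 2 by omega)
  calc ((n : ℝ) / 2) ^ k / (k : ℝ) ^ k
      ≤ ((n + 1 - k : ℕ) : ℝ) ^ k / (k.factorial : ℝ) := by
        gcongr
        exact_mod_cast Nat.factorial_le_pow k
    _ ≤ n.choose k := Nat.pow_le_choose k n

lemma le_phi_of_two_mul_le {n k : ℕ} (hk : 1 ≤ k) (hkn : 2 * k ≤ n) {q : ℝ} (hq0 : 0 < q)
    (hq1 : q < 1) :
    (n * q / 2) ^ k * (1 - q) ^ ((k : ℝ) ^ 2 / 2) / (q * k ^ 2) ≤ phi n k q := by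
  have hk0 : (0 : ℝ) < k := by exact_mod_cast hk
  have hexp : ((k * (k - 1) / 2 - (k - 1) : ℕ) : ℝ) ≤ (k : ℝ) ^ 2 / 2 := by
    calc ((k * (k - 1) / 2 - (k - 1) : ℕ) : ℝ) ≤ ((k * k / 2 : ℕ) : ℝ) := by
          gcongr
          exact (Nat.sub_le _ _).trans (Nat.div_le_div_right (by gcongr; omega))
      _ ≤ ((k * k : ℕ) : ℝ) / 2 := Nat.cast_div_le
      _ = (k : ℝ) ^ 2 / 2 := by push_cast; ring
  have hrpow : (k : ℝ) ^ ((k : ℝ) - 2) = (k : ℝ) ^ k / (k : ℝ) ^ 2 := by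
    rw [Real.rpow_sub hk0, Real.rpow_natCast, Real.rpow_two]
  have hqpow : q ^ (k - 1) = q ^ k / q := by
    rw [eq_div_iff hq0.ne', ← pow_succ, Nat.sub_add_cancel hk]
  calc (n * q / 2) ^ k * (1 - q) ^ ((k : ℝ) ^ 2 / 2) / (q * k ^ 2)
      = ((n / 2) ^ k / (k : ℝ) ^ k) * ((k : ℝ) ^ k / (k : ℝ) ^ 2) * (q ^ k / q) *
          (1 - q) ^ ((k : ℝ) ^ 2 / 2) := by
        field_simp
        ring
    _ ≤ n.choose k * ((k : ℝ) ^ k / (k : ℝ) ^ 2) * (q ^ k / q) *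
          (1 - q) ^ ((k * (k - 1) / 2 - (k - 1) : ℕ) : ℝ) := by
        gcongr ?_ * _ * _ * ?_
        · exact Nat.half_pow_div_pow_le_choose hkn
        · exact Real.rpow_le_rpow_of_exponent_ge (by linarith) (by linarith) hexp
    _ = phi n k q := by
        rw [phi, hrpow, hqpow, Real.rpow_natCast]

lemma log_lt_phi {n k : ℕ} {q : ℝ} (hq0 : 0 < q) (hq1 : q ≤ 1 / 100)
    (hL : 100 ≤ Real.log (n * q)) (hkl : 3 / 2 * Real.log (n * q) / q ≤ k)
    (hku : k ≤ 3 / 2 * Real.log (n * q) / q + 1) (hkn : 2 * k ≤ n) :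
    Real.log (n * q) < phi n k q := by
  set L := Real.log (n * q)
  have hLk : 150 * L ≤ k := by
    calc 150 * L = 3 / 2 * L / (1 / 100) := by ring
      _ ≤ 3 / 2 * L / q := by gcongr
      _ ≤ k := hkl
  have hk : 1 ≤ k := by exact_mod_cast (show (1 : ℝ) ≤ k by linarith)
  have hn : (0 : ℝ) < n := by exact_mod_cast (show 0 < n by omega)
  have hkq : k * q ≤ 3 / 2 * L + q := by
    have := mul_le_mul_of_nonneg_right hku hq0.le
    rwa [add_mul, div_mul_cancel₀ _ hq0.ne', one_mul] at this
  have hlog2 : Real.log 2 ≤ 1 := by linarith [Real.log_le_sub_one_of_pos two_pos]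
  have hlog1q : -(100 / 99 * q) ≤ Real.log (1 - q) := by
    have hlog := Real.one_sub_inv_le_log_of_pos (show 0 < 1 - q by linarith)
    have hinv : (1 - q)⁻¹ ≤ 100 / 99 := by
      rw [inv_le_comm₀ (by linarith) (by norm_num)]; linarith
    have hcancel : (1 - q)⁻¹ * (1 - q) = 1 := inv_mul_cancel₀ (by linarith)
    nlinarith
  have hE : 3 * k < k * Real.log (n * q / 2) + (k : ℝ) ^ 2 / 2 * Real.log (1 - q) := by
    have hquad : -(50 / 99 * k * (3 / 2 * L + q)) ≤ (k : ℝ) ^ 2 / 2 * Real.log (1 - q) := by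
      nlinarith [mul_le_mul_of_nonneg_left hlog1q (by positivity : (0 : ℝ) ≤ (k : ℝ) ^ 2 / 2)]
    rw [Real.log_div (by positivity) two_ne_zero]
    nlinarith
  have hpow : (n * q / 2) ^ k * (1 - q) ^ ((k : ℝ) ^ 2 / 2) =
      Real.exp (k * Real.log (n * q / 2) + (k : ℝ) ^ 2 / 2 * Real.log (1 - q)) := by
    rw [Real.exp_add, Real.exp_nat_mul, Real.exp_log (by positivity),
      Real.rpow_def_of_pos (by linarith), mul_comm (Real.log _)]
  refine lt_of_lt_of_le ?_ (le_phi_of_two_mul_le hk hkn hq0 (by linarith))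
  rw [hpow, lt_div_iff₀ (by positivity)]
  calc L * (q * k ^ 2) ≤ k * (1 * k ^ 2) := by gcongr <;> linarith
    _ < Real.exp k ^ 3 := by
        rw [one_mul, ← pow_succ']
        gcongr
        linarith [Real.add_one_le_exp k]
    _ = Real.exp (3 * k) := by rw [← Real.exp_nat_mul]; norm_num
    _ < _ := Real.exp_lt_exp.2 hE

theorem sSup_one_le_phi_eq_or_eq_succ {n : ℕ} {q : ℝ} (hq0 : 0 < q) (hq1 : q ≤ 1 / 100)
    (hL : 100 ≤ Real.log (n * q)) :
    sSup {k : ℕ | 1 ≤ k ∧ k ≤ n ∧ 1 ≤ phi n k q} =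
        sSup {k : ℕ | 1 ≤ k ∧ k ≤ n ∧ Real.log (n * q) < phi n k q} ∨
      sSup {k : ℕ | 1 ≤ k ∧ k ≤ n ∧ 1 ≤ phi n k q} =
        sSup {k : ℕ | 1 ≤ k ∧ k ≤ n ∧ Real.log (n * q) < phi n k q} + 1 := by
  set L := Real.log (n * q)
  have hn : (0 : ℝ) < n := Nat.cast_pos.2 (Nat.pos_of_ne_zero fun h => by norm_num [L, h] at hL)
  have hnq : n * q = Real.exp L := (Real.exp_log (by positivity)).symm
  set kh := ⌈3 / 2 * L / q⌉₊
  have hkl : 3 / 2 * L / q ≤ kh := Nat.le_ceil _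
  have hku : (kh : ℝ) ≤ 3 / 2 * L / q + 1 := (Nat.ceil_lt_add_one (by positivity)).le
  have hkh : 1 ≤ kh := Nat.one_le_iff_ne_zero.2 (by positivity)
  have hkhn : 2 * kh ≤ n := by
    suffices (2 * kh : ℝ) ≤ n by exact_mod_cast this
    have hexp := Real.quadratic_le_exp_of_nonneg (show 0 ≤ L by linarith)
    have hkq : (3 / 2 * L / q + 1) * q = 3 / 2 * L + q := by field_simp
    rw [← mul_le_mul_iff_of_pos_right hq0, hnq]
    nlinarith [mul_le_mul_of_nonneg_right hku hq0.le]
  refine Nat.sSup_eq_or_eq_succ_of_subset ⟨n, fun k hk => hk.2.1⟩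
    (fun k ⟨hk1, hkn, hphi⟩ => ⟨hk1, hkn, by linarith⟩)
    (a := kh) ⟨hkh, by omega, log_lt_phi hq0 hq1 hL hkl hku hkhn⟩ ?_
  rintro k hkhk hkA ⟨-, hkn, hphi⟩
  have hk : 1 ≤ k := by omega
  have hphik : phi n k q ≤ L := not_lt.1 fun h => hkA ⟨hk, by omega, h⟩
  have hgap : 3 / 2 * L ≤ q * (k - 1) := by
    have : (kh : ℝ) ≤ k - 1 := by
      rw [le_sub_iff_add_le]; exact_mod_cast hkhk
    rw [div_le_iff₀ hq0] at hkl
    nlinarith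
  linarith [phi_succ_lt_one hq0 (by linarith) (by linarith) hk hkn hgap hphik]

theorem expectation_threshold_near_kzero (p : ℕ → ℝ) (hp : ∀ n, p n ∈ Set.Ioo (0 : ℝ) 1)
    (h1 : Tendsto (fun n : ℕ => (n : ℝ) * p n) atTop atTop)
    (h2 : Tendsto (fun n : ℕ => p n * (Real.log n) ^ 2) atTop (nhds 0)) :
    ∀ᶠ n : ℕ in atTop,
      sSup {k : ℕ | 1 ≤ k ∧ k ≤ n ∧ 1 ≤ phi n k (p n)} = kzero p n ∨
      sSup {k : ℕ | 1 ≤ k ∧ k ≤ n ∧ 1 ≤ phi n k (p n)} = kzero p n + 1 := by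
  have hq_small : ∀ᶠ n : ℕ in atTop, p n ≤ 1 / 100 := by
    filter_upwards [h2.eventually (ge_mem_nhds (by norm_num : (0 : ℝ) < 1 / 100)),
      eventually_ge_atTop 3] with n hsmall hn
    have hlog : 1 ≤ Real.log n := by
      rw [Real.le_log_iff_exp_le (by positivity)]
      linarith [Real.exp_one_lt_d9, (show (3 : ℝ) ≤ n by exact_mod_cast hn)]
    linarith [le_mul_of_one_le_right (hp n).1.le (one_le_pow₀ (n := 2) hlog)]
  have hL_large : ∀ᶠ n : ℕ in atTop, 100 ≤ Real.log (n * p n) := by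
    filter_upwards [h1.eventually_ge_atTop (Real.exp 100)] with n hn
    exact (Real.le_log_iff_exp_le ((Real.exp_pos 100).trans_le hn)).2 hn
  filter_upwards [hq_small, hL_large] with n hq hL
  exact sSup_one_le_phi_eq_or_eq_succ (hp n).1 hq hL
end

section
/- Let p : ℕ → (0,1) be a sequence with n·p(n) → ∞ and p(n)·(ln n)² → 0 as n → ∞. Then k₀(n)·p(n) − 2·ln(n·p(n)) → 2 as n → ∞. -/
/-!
Write `q = p n` and `L = log (n q)`. Stirling-type bounds on `n.choose k` give
`log (phi n k q) = k (L + 1) - q k² / 2 + O(log n + k² / n + q² k²)`, and when `k q` is of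
order `L` the hypotheses make every error term `o(k)`. The main term `k (L + 1 - k q / 2)`
changes sign at `k q = 2 L + 2`: for `k q ≥ 2 L + 2 + ε` it forces `phi ≤ 1 ≤ L`, while at
`k = ⌈(2 L + 2 - ε / 2) / q⌉` it forces `phi > L`. So `kzero p n * q` is eventually within `ε`
of `2 L + 2`.
-/

open Filter

open Real
open scoped Nat

lemma log_factorial_le_stirling {k : ℕ} (hk : k ≠ 0) :
    log k ! ≤ k * log k - k + log k / 2 + 1 := by
  have h := Stirling.log_stirlingSeq'_antitone (Nat.zero_le (k - 1))
  simp only [Function.comp, Nat.succ_eq_add_one, Nat.sub_add_cancel (Nat.one_le_iff_ne_zero.2 hk),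
    zero_add, Stirling.stirlingSeq_one] at h
  have hk0 : (0 : ℝ) < k := by positivity
  rw [Stirling.log_stirlingSeq_formula, log_div (exp_pos 1).ne' (by positivity), log_exp,
    log_sqrt zero_le_two, log_mul two_ne_zero hk0.ne', log_div hk0.ne' (exp_pos 1).ne',
    log_exp] at h
  linarith

lemma log_choose_le {n k : ℕ} (hk : k ≠ 0) (hkn : k ≤ n) :
    log (n.choose k) ≤ k * (log n + 1 - log k) := by
  have hn : (0 : ℝ) < n := by exact_mod_cast (Nat.pos_of_ne_zero hk).trans_le hkn
  have h_choose := log_le_log (mod_cast Nat.choose_pos hkn) (Nat.choose_le_pow_div (α := ℝ) k n)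
  have h_fact := log_le_log (by positivity) (pow_div_factorial_le_exp _ k.cast_nonneg k)
  rw [log_div (by positivity) (by positivity), log_pow] at h_choose h_fact
  rw [log_exp] at h_fact
  linarith

lemma le_log_choose {n k : ℕ} (hk : k ≠ 0) (hkn : k ≤ n) :
    k * log (n + 1 - k) - k * log k + k - log k / 2 - 1 ≤ log (n.choose k) := by
  have := Nat.sub_pos_of_lt (Nat.lt_succ_of_le hkn)
  have h_choose := log_le_log (by positivity) (Nat.pow_le_choose (α := ℝ) k n)
  rw [log_div (by positivity) (by positivity), log_pow, Nat.cast_sub (Nat.le_succ_of_le hkn),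
    Nat.cast_succ] at h_choose
  linarith [log_factorial_le_stirling hk]

lemma le_log_one_sub_of_le_half {x : ℝ} (hx0 : 0 ≤ x) (hx : x ≤ 1 / 2) :
    -x - 2 * x ^ 2 ≤ log (1 - x) := by
  have h := one_sub_inv_le_log_of_pos (show 0 < 1 - x by linarith)
  have h' : -x - 2 * x ^ 2 ≤ 1 - (1 - x)⁻¹ := by
    have h1x : 0 < 1 - x := by linarith
    rw [le_sub_iff_add_le, ← le_sub_iff_add_le', inv_le_comm₀ h1x (by nlinarith),
      inv_le_iff_one_le_mul₀ (by nlinarith)]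
    nlinarith [sq_nonneg x]
  linarith

lemma cast_phi_exponent {k : ℕ} (hk : 1 ≤ k) :
    ((k * (k - 1) / 2 - (k - 1) : ℕ) : ℝ) = (k - 1) * (k - 2) / 2 := by
  obtain ⟨j, rfl⟩ := Nat.exists_eq_add_of_le' hk
  rw [← Nat.choose_two_right, Nat.add_sub_cancel, Nat.choose_succ_succ', Nat.choose_one_right,
    Nat.add_sub_cancel_left, Nat.cast_choose_two]
  push_cast
  ring

lemma phi_pos {n k : ℕ} {q : ℝ} (hk : 1 ≤ k) (hkn : k ≤ n) (hq : 0 < q) (hq1 : q < 1) :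
    0 < phi n k q := by
  have := Nat.choose_pos hkn
  have : 0 < 1 - q := sub_pos.2 hq1
  unfold phi
  positivity

lemma log_phi {n k : ℕ} {q : ℝ} (hk : 1 ≤ k) (hkn : k ≤ n) (hq : 0 < q) (hq1 : q < 1) :
    log (phi n k q) = log (n.choose k) + (k - 2) * log k + (k - 1) * log q +
      (k - 1) * (k - 2) / 2 * log (1 - q) := by
  have := Nat.choose_pos hkn
  have : 0 < 1 - q := sub_pos.2 hq1
  have : (0 : ℝ) < k := by exact_mod_cast hk
  unfold phi
  rw [log_mul (by positivity) (by positivity), log_mul (by positivity) (by positivity),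
    log_mul (by positivity) (by positivity), log_rpow this, log_pow, log_pow,
    cast_phi_exponent hk, Nat.cast_sub hk, Nat.cast_one]

lemma log_phi_le {n k : ℕ} {q : ℝ} (hk : 1 ≤ k) (hkn : k ≤ n) (hq : 0 < q) (hq1 : q < 1) :
    log (phi n k q) ≤
      k * (log (n * q) + 1) - log q - 2 * log k - q * ((k - 1) * (k - 2) / 2) := by
  have hn : (n : ℝ) ≠ 0 := by exact_mod_cast (Nat.one_pos.trans_le (hk.trans hkn)).ne'
  have h_exp : 0 ≤ ((k : ℝ) - 1) * (k - 2) / 2 := cast_phi_exponent hk ▸ Nat.cast_nonneg _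
  have h_log := mul_le_mul_of_nonneg_left (log_le_sub_one_of_pos (sub_pos.2 hq1)) h_exp
  rw [log_phi hk hkn hq hq1, log_mul hn hq.ne']
  linarith [log_choose_le (by omega) hkn]

lemma le_log_phi {n k : ℕ} {q : ℝ} (hk : 1 ≤ k) (hkn : 2 * k ≤ n) (hq : 0 < q)
    (hq2 : q ≤ 1 / 2) :
    k * (log (n * q) + 1) - 2 * k ^ 2 / n - 5 / 2 * log k - log q - 1 -
      (q + 2 * q ^ 2) * k ^ 2 / 2 ≤ log (phi n k q) := by
  have hk1 : (1 : ℝ) ≤ k := by exact_mod_cast hk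
  have hkn' : 2 * (k : ℝ) ≤ n := by exact_mod_cast hkn
  have hn : (0 : ℝ) < n := by linarith
  have h_ratio : (k : ℝ) / n ≤ 1 / 2 := by rw [div_le_iff₀ hn]; linarith
  have h_log_sub : log n - 2 * (k / n) ≤ log (n + 1 - k) := by
    have := le_log_one_sub_of_le_half (by positivity) h_ratio
    calc log n - 2 * (k / n) ≤ log n + log (1 - k / n) := by
          nlinarith [mul_le_mul_of_nonneg_left h_ratio (by positivity : (0 : ℝ) ≤ k / n)]
      _ = log (n - k) := by
          rw [← log_mul hn.ne' (by linarith), mul_one_sub, mul_div_cancel₀ _ hn.ne']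
      _ ≤ log (n + 1 - k) := log_le_log (by linarith) (by linarith)
  have h_choose_term : k * log n - 2 * k ^ 2 / n ≤ k * log (n + 1 - k) := by
    calc k * log n - 2 * k ^ 2 / n = k * (log n - 2 * (k / n)) := by ring
      _ ≤ k * log (n + 1 - k) := mul_le_mul_of_nonneg_left h_log_sub (by positivity)
  have h_exp_term :
      (k : ℝ) ^ 2 / 2 * (-q - 2 * q ^ 2) ≤ (k - 1) * (k - 2) / 2 * log (1 - q) := by
    have h_log := le_log_one_sub_of_le_half hq.le hq2
    have h_nonpos : log (1 - q) ≤ 0 := log_nonpos (by linarith) (by linarith)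
    nlinarith
  rw [log_phi hk (by omega) hq (by linarith), log_mul hn.ne' hq.ne']
  linarith [le_log_choose (by omega : k ≠ 0) (by omega : k ≤ n)]

lemma phi_le_log_of_le_mul {n k : ℕ} {q e : ℝ} (hk : 1 ≤ k) (hkn : k ≤ n)
    (hq : 0 < q) (hq1 : q < 1) (hL : 1 ≤ log (n * q)) (hq_small : q ≤ e / 6)
    (hq_log : q * log n ≤ e / 2) (hkq : 2 * log (n * q) + 2 + e ≤ k * q) :
    phi n k q ≤ log (n * q) := by
  set L := log (n * q)
  have he : 0 < e := by linarith
  have hk0 : (0 : ℝ) ≤ k := k.cast_nonneg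
  have hn : (n : ℝ) ≠ 0 := by exact_mod_cast (Nat.one_pos.trans_le (hk.trans hkn)).ne'
  have hL_split : L = log n + log q := log_mul hn hq.ne'
  have h_quad :
      k * (L + 1) + k * (e / 2) - k * (3 * q / 2) ≤ q * ((k - 1) * (k - 2) / 2) := by
    nlinarith [mul_le_mul_of_nonneg_left hkq hk0]
  have h_linear : k * (3 * q / 2) ≤ k * (e / 4) := mul_le_mul_of_nonneg_left (by linarith) hk0
  have h_log_n : log n ≤ k * (e / 4) := by
    refine le_of_mul_le_mul_left ?_ hq
    nlinarith [mul_le_mul_of_nonneg_left (show 4 ≤ k * q by linarith) he.le]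
  have h_log_phi : log (phi n k q) ≤ 0 := by
    linarith [log_phi_le hk hkn hq hq1, log_nonneg (show (1 : ℝ) ≤ k by exact_mod_cast hk)]
  rw [← log_le_log_iff (phi_pos hk hkn hq hq1) (by linarith)]
  linarith [log_nonneg hL]

-- The constants make each error term of `le_log_phi` a small multiple of `k * e`, leaving
-- `log (phi n k q) ≥ 5 * k * e / 64 - 5 / 2 * log n - 1`, while `k * e ≥ 128 * (log n + 1)`.
lemma log_lt_phi_of_mul_le {n k : ℕ} {q e : ℝ} (he1 : e ≤ 1) (hk : 1 ≤ k)
    (hkn : 64 * k ≤ e * n) (hq : 0 < q) (hq_small : q ≤ e / 256)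
    (hq_log : q * log n ≤ e / 256) (hkq1 : 1 ≤ k * q)
    (hkq2 : k * q ≤ 2 * log (n * q) + 2 - e / 4) :
    log (n * q) < phi n k q := by
  set L := log (n * q)
  have hk0 : (0 : ℝ) ≤ k := k.cast_nonneg
  have h2kn : 2 * k ≤ n := by
    have : 2 * (k : ℝ) ≤ n := by nlinarith [(n.cast_nonneg : (0 : ℝ) ≤ n)]
    exact_mod_cast this
  have hn : (0 : ℝ) < n := by exact_mod_cast (Nat.one_pos.trans_le (by omega : 1 ≤ n))
  have h_log_q : log q < 0 := log_neg hq (by linarith)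
  have hL_le : L ≤ log n := by linarith [show L = log n + log q from log_mul hn.ne' hq.ne']
  have h_log_k : log k ≤ log n :=
    log_le_log (by exact_mod_cast hk) (by exact_mod_cast (by omega : k ≤ n))
  have h_log_n : 0 ≤ log n := log_nonneg (by exact_mod_cast (by omega : 1 ≤ n))
  have h_main : q * k ^ 2 / 2 ≤ k * (L + 1) - k * (e / 8) := by
    nlinarith [mul_le_mul_of_nonneg_left hkq2 hk0]
  have h_square : 2 * q ^ 2 * k ^ 2 / 2 ≤ k * (e / 64) := by
    have : q * (k * q) ≤ q * (2 * L + 2) := mul_le_mul_of_nonneg_left (by linarith) hq.le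
    nlinarith [mul_le_mul_of_nonneg_left hL_le hq.le, mul_le_mul_of_nonneg_left this hk0]
  have h_density : 2 * k ^ 2 / n ≤ k * (e / 32) := by
    rw [div_le_iff₀ hn]; nlinarith [mul_le_mul_of_nonneg_left hkn hk0]
  have h_ke : 256 * log n + 256 ≤ 2 * (k * e) := by
    nlinarith [mul_le_mul_of_nonneg_left hkq1 h_log_n,
      mul_le_mul_of_nonneg_left hkq1 (by linarith : (0 : ℝ) ≤ e)]
  have h_log_phi : L ≤ log (phi n k q) := by
    linarith [le_log_phi hk h2kn hq (by linarith)]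
  calc L < L + 1 := lt_add_one L
    _ ≤ exp (log (phi n k q)) := (add_one_le_exp L).trans (exp_le_exp.2 h_log_phi)
    _ = phi n k q := exp_log (phi_pos hk (by omega) hq (by linarith))

lemma exists_log_lt_phi {n : ℕ} {q e : ℝ} (he1 : e ≤ 1) (hq : 0 < q)
    (hq_small : q ≤ e / 256) (hq_log : q * log n ≤ e / 256) (hL : 1 ≤ log (n * q))
    (h_dense : 128 * log (n * q) + 192 ≤ e * (n * q)) :
    ∃ k, 1 ≤ k ∧ k ≤ n ∧ log (n * q) < phi n k q ∧
      2 * log (n * q) + 2 - e / 2 ≤ k * q := by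
  set L := log (n * q)
  have ht : 0 ≤ (2 * L + 2 - e / 2) / q := div_nonneg (by linarith) hq.le
  have hkq1 := (div_le_iff₀ hq).1 (Nat.le_ceil ((2 * L + 2 - e / 2) / q))
  have hkq2 := (lt_div_iff₀ hq).1 (sub_lt_iff_lt_add.2 (Nat.ceil_lt_add_one ht))
  set k := ⌈(2 * L + 2 - e / 2) / q⌉₊
  have hk : 1 ≤ k := by
    have : (0 : ℝ) < k := pos_of_mul_pos_left (by linarith : 0 < (k : ℝ) * q) hq.le
    exact_mod_cast this
  have hkn : 64 * k ≤ e * n := le_of_mul_le_mul_right (by linarith) hq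
  have hkn' : k ≤ n := by
    have : (k : ℝ) ≤ n := by nlinarith [(n.cast_nonneg : (0 : ℝ) ≤ n)]
    exact_mod_cast this
  exact ⟨k, hk, hkn',
    log_lt_phi_of_mul_le he1 hk hkn hq hq_small hq_log (by linarith) (by linarith), hkq1⟩

lemma le_kzero {p : ℕ → ℝ} {n k : ℕ} (hk : 1 ≤ k) (hkn : k ≤ n)
    (h : log (n * p n) < phi n k (p n)) : k ≤ kzero p n :=
  le_csSup ⟨n, fun _ hm => hm.2.1⟩ ⟨hk, hkn, h⟩

lemma kzero_mem {p : ℕ → ℝ} {n : ℕ}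
    (h : ∃ k, 1 ≤ k ∧ k ≤ n ∧ log (n * p n) < phi n k (p n)) :
    1 ≤ kzero p n ∧ kzero p n ≤ n ∧ log (n * p n) < phi n (kzero p n) (p n) :=
  Nat.sSup_mem h ⟨n, fun _ hm => hm.2.1⟩

lemma abs_kzero_mul_sub_lt {p : ℕ → ℝ} {n : ℕ} {e : ℝ} (he1 : e ≤ 1) (hq : 0 < p n)
    (hq_small : p n ≤ e / 256) (hq_log : p n * log n ≤ e / 256) (hL : 1 ≤ log (n * p n))
    (h_dense : 128 * log (n * p n) + 192 ≤ e * (n * p n)) :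
    |kzero p n * p n - 2 * log (n * p n) - 2| < e := by
  obtain ⟨k, hk, hkn, hk_lt, hkq⟩ := exists_log_lt_phi he1 hq hq_small hq_log hL h_dense
  obtain ⟨hm, hmn, hm_lt⟩ := kzero_mem ⟨k, hk, hkn, hk_lt⟩
  have h_lower : k * p n ≤ kzero p n * p n :=
    mul_le_mul_of_nonneg_right (by exact_mod_cast le_kzero hk hkn hk_lt) hq.le
  have h_upper : kzero p n * p n < 2 * log (n * p n) + 2 + e := by
    by_contra! h
    exact (phi_le_log_of_le_mul hm hmn hq (by linarith) hL (by linarith) (by linarith) h).not_gt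
      hm_lt
  rw [abs_lt]
  constructor <;> linarith

lemma tendsto_zero_of_tendsto_mul_zero {α : Type*} {l : Filter α} {f g : α → ℝ}
    (hf : ∀ᶠ x in l, 0 ≤ f x) (hg : ∀ᶠ x in l, 1 ≤ g x)
    (h : Tendsto (fun x => f x * g x) l (nhds 0)) : Tendsto f l (nhds 0) :=
  squeeze_zero' hf
    (by filter_upwards [hf, hg] with x hfx hgx using le_mul_of_one_le_right hfx hgx) h

lemma eventually_mul_log_add_le (a b : ℝ) {c : ℝ} (hc : 0 < c) :
    ∀ᶠ x in atTop, a * log x + b ≤ c * x := by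
  have h : (fun x => a * log x + b) =o[atTop] id :=
    (isLittleO_log_id_atTop.const_mul_left a).add (Asymptotics.isLittleO_const_id_atTop b)
  filter_upwards [h.bound hc, eventually_ge_atTop 0] with x hx hx0
  rw [Real.norm_eq_abs, id, Real.norm_eq_abs, abs_of_nonneg hx0] at hx
  exact (le_abs_self _).trans hx

theorem kzero_asymptotics (p : ℕ → ℝ) (hp : ∀ n, p n ∈ Set.Ioo (0 : ℝ) 1)
    (h1 : Tendsto (fun n : ℕ => (n : ℝ) * p n) atTop atTop)
    (h2 : Tendsto (fun n : ℕ => p n * (Real.log n) ^ 2) atTop (nhds 0)) :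
    Tendsto (fun n : ℕ => (kzero p n : ℝ) * p n - 2 * Real.log (n * p n))
      atTop (nhds 2) := by
  have h_log : ∀ᶠ n : ℕ in atTop, 1 ≤ log n :=
    (tendsto_log_atTop.comp tendsto_natCast_atTop_atTop).eventually_ge_atTop 1
  have hp_pos : ∀ᶠ n : ℕ in atTop, 0 ≤ p n := Eventually.of_forall fun n => (hp n).1.le
  have hp_log_pos : ∀ᶠ n : ℕ in atTop, 0 ≤ p n * log n := by
    filter_upwards [hp_pos, h_log] with n hn hn' using mul_nonneg hn (by linarith)
  have hp_log : Tendsto (fun n => p n * log n) atTop (nhds 0) :=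
    tendsto_zero_of_tendsto_mul_zero hp_log_pos h_log (by simpa only [mul_assoc, sq] using h2)
  have hp_zero : Tendsto p atTop (nhds 0) := tendsto_zero_of_tendsto_mul_zero hp_pos h_log hp_log
  refine Metric.tendsto_nhds.2 fun ε hε => ?_
  have he : 0 < min ε 1 / 256 := by positivity
  filter_upwards [hp_zero.eventually (ge_mem_nhds he), hp_log.eventually (ge_mem_nhds he),
    h1.eventually (tendsto_log_atTop.eventually_ge_atTop 1),
    h1.eventually (eventually_mul_log_add_le 128 192 (lt_min hε one_pos))]
    with n hq_small hq_log hL h_dense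
  rw [Real.dist_eq]
  exact (abs_kzero_mul_sub_lt (min_le_right ε 1) (hp n).1 hq_small hq_log hL h_dense).trans_le
    (min_le_left ε 1)
end

section
/- Let ε ∈ (0,1) be fixed and let p : ℕ → (0,1) be a sequence with n·p(n) → ∞ as n → ∞. Then max{φ(n,k,p(n)) : k integer, ε·n ≤ k ≤ n} → 0 as n → ∞. -/
open Filter

open Real

lemma auxA (c : ℝ) (hc : 0 < c) :
    Tendsto (fun x : ℝ => x * Real.exp (-(c * x))) atTop (nhds 0) := by
  have h := (tendsto_pow_mul_exp_neg_atTop_nhds_zero 1).comp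
    (tendsto_id.const_mul_atTop hc)
  have heq : (fun x : ℝ => x * Real.exp (-(c * x)))
      = fun x : ℝ => (1/c) * ((fun y : ℝ => y ^ 1 * Real.exp (-y)) ((c * x))) := by
    funext x
    simp only [pow_one]
    field_simp
  rw [heq]
  simpa using (h.const_mul (1/c))


lemma choose_le_two_pow' (n k : ℕ) : n.choose k ≤ 2 ^ n := by
  rcases le_or_gt k n with h | h
  · calc n.choose k ≤ ∑ m ∈ Finset.range (n+1), n.choose m :=
        Finset.single_le_sum (fun i _ => Nat.zero_le _) (Finset.mem_range.2 (by omega))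
    _ = 2 ^ n := Nat.sum_range_choose n
  · simp [Nat.choose_eq_zero_of_lt h]

lemma phi_le (ε : ℝ) (hε0 : 0 < ε) (n k : ℕ) (p : ℝ)
    (hp0 : 0 < p) (hp1 : p < 1) (hεn : 4 ≤ ε * n)
    (hbase : (2:ℝ)^(1/ε) * ((n:ℝ)*p) * Real.exp (-(ε*((n:ℝ)*p))/4) ≤ 1/2)
    (hk1 : ε * n ≤ k) (hk2 : k ≤ n) :
    phi n k p ≤ 2 * (2:ℝ)^(1/ε) * n * Real.exp (-((ε*Real.log 2)*n)) := by
  set D : ℝ := (2:ℝ)^(1/ε) with hD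
  have hD1 : (1:ℝ) ≤ D := Real.one_le_rpow one_le_two (by positivity)
  have hDpos : 0 < D := lt_of_lt_of_le one_pos hD1
  have hk4 : 4 ≤ k := by exact_mod_cast (le_trans hεn hk1 : (4:ℝ) ≤ k)
  have hkn : (k:ℝ) ≤ n := by exact_mod_cast hk2
  have hk1' : (1:ℝ) ≤ k := by exact_mod_cast (by omega : 1 ≤ k)
  set j : ℕ := k - 1 with hj
  have hjk : k = j + 1 := by omega
  have hjcast : (j:ℝ) = (k:ℝ) - 1 := by
    rw [hj, Nat.cast_sub (by omega)]; simp
  have hnpos : (0:ℝ) < n := lt_of_lt_of_le (by linarith [hk1'] : (0:ℝ) < k) hkn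
  -- Step 1: choose bound
  have h1 : (n.choose k : ℝ) ≤ D ^ k := by
    have a1 : (n.choose k : ℝ) ≤ (2:ℝ) ^ n := by exact_mod_cast choose_le_two_pow' n k
    have a2 : (2:ℝ) ^ n ≤ D ^ k := by
      rw [← Real.rpow_natCast 2 n, ← Real.rpow_natCast D k, hD,
        ← Real.rpow_mul (by norm_num)]
      apply Real.rpow_le_rpow_of_exponent_le one_le_two
      rw [one_div, inv_mul_eq_div, le_div_iff₀ hε0, mul_comm]
      exact hk1
    exact a1.trans a2
  -- Step 2: k^(k-2) bound
  have h2 : (k:ℝ) ^ ((k:ℝ) - 2) ≤ (n:ℝ) ^ k := by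
    have a1 : (k:ℝ) ^ ((k:ℝ) - 2) ≤ (k:ℝ) ^ ((k:ℝ)) :=
      Real.rpow_le_rpow_of_exponent_le hk1' (by linarith)
    have a2 : (k:ℝ) ^ ((k:ℝ)) ≤ (n:ℝ) ^ ((k:ℝ)) :=
      Real.rpow_le_rpow (by positivity) hkn (by positivity)
    calc (k:ℝ) ^ ((k:ℝ) - 2) ≤ (n:ℝ) ^ ((k:ℝ)) := a1.trans a2
      _ = (n:ℝ) ^ k := Real.rpow_natCast n k
  -- Step 3: cast of edge exponent
  obtain ⟨m, hm⟩ : 2 ∣ k * j := by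
    rw [hjk, mul_comm]; exact (Nat.even_mul_succ_self j).two_dvd
  have hmval : k * (k - 1) / 2 = m := by
    rw [← hj, hm, Nat.mul_div_cancel_left _ (by norm_num)]
  have hjm : j ≤ m := by
    have := Nat.mul_le_mul_right j (show 2 ≤ k by omega)
    omega
  have hm' : (k:ℝ) * j = 2 * m := by exact_mod_cast hm
  have hE : ((k * (k-1) / 2 - (k-1) : ℕ) : ℝ) = (j:ℝ) * ((k:ℝ) - 2) / 2 := by
    rw [hmval, ← hj, Nat.cast_sub hjm]
    linear_combination (-1/2 : ℝ) * hm'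
  -- Step 4: (1-p)^E bound
  have h4 : (1 - p) ^ (k * (k-1) / 2 - (k-1)) ≤
      Real.exp (-(p * ((k:ℝ)-2) / 2)) ^ j := by
    calc (1 - p) ^ (k * (k-1) / 2 - (k-1))
        ≤ Real.exp (-p) ^ (k * (k-1) / 2 - (k-1)) := by
          apply pow_le_pow_left₀ (by linarith)
          linarith [Real.add_one_le_exp (-p)]
      _ = Real.exp (((k * (k-1) / 2 - (k-1) : ℕ) : ℝ) * (-p)) := by
          rw [← Real.exp_nat_mul]
      _ = Real.exp ((j:ℝ) * (-(p * ((k:ℝ)-2) / 2))) := by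
          rw [hE]; ring_nf
      _ = Real.exp (-(p * ((k:ℝ)-2) / 2)) ^ j := Real.exp_nat_mul _ j
  -- Step 5: combine
  have hcomb : phi n k p ≤ D ^ k * (n:ℝ) ^ k * p ^ j *
      Real.exp (-(p * ((k:ℝ)-2) / 2)) ^ j := by
    unfold phi
    rw [← hj]
    have hA2 : (0:ℝ) ≤ (k:ℝ) ^ ((k:ℝ) - 2) := Real.rpow_nonneg (by positivity) _
    have hnn1 : (0:ℝ) ≤ D ^ k * (n:ℝ) ^ k :=
      mul_nonneg (pow_nonneg hDpos.le k) (pow_nonneg n.cast_nonneg k)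
    apply mul_le_mul _ h4 (pow_nonneg (by linarith) _)
      (mul_nonneg hnn1 (pow_nonneg hp0.le j))
    apply mul_le_mul _ le_rfl (pow_nonneg hp0.le j) hnn1
    exact mul_le_mul h1 h2 hA2 (pow_nonneg hDpos.le k)
  -- Step 6: rearrange RHS and bound base
  have hbase2 : D * (n:ℝ) * p * Real.exp (-(p * ((k:ℝ)-2) / 2)) ≤ 1/2 := by
    calc D * (n:ℝ) * p * Real.exp (-(p * ((k:ℝ)-2) / 2))
        ≤ D * ((n:ℝ) * p) * Real.exp (-(ε*((n:ℝ)*p))/4) := by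
          rw [mul_assoc D (n:ℝ) p]
          apply mul_le_mul_of_nonneg_left _ (by positivity)
          apply Real.exp_le_exp.2
          have f1 : ε * (n:ℝ) * p ≤ (k:ℝ) * p := mul_le_mul_of_nonneg_right hk1 hp0.le
          have f2 : 4 * p ≤ (k:ℝ) * p :=
            mul_le_mul_of_nonneg_right (le_trans hεn hk1) hp0.le
          linarith
      _ ≤ 1/2 := hbase
  have hbase0 : (0:ℝ) ≤ D * (n:ℝ) * p * Real.exp (-(p * ((k:ℝ)-2) / 2)) := by
    positivity
  have hre : D ^ k * (n:ℝ) ^ k * p ^ j * Real.exp (-(p * ((k:ℝ)-2) / 2)) ^ j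
      = D * (n:ℝ) * (D * (n:ℝ) * p * Real.exp (-(p * ((k:ℝ)-2) / 2))) ^ j := by
    rw [hjk, pow_succ D j, pow_succ (n:ℝ) j, mul_pow, mul_pow, mul_pow]
    ring
  have hstep : phi n k p ≤ D * (n:ℝ) * (1/2 : ℝ) ^ j := by
    rw [hre] at hcomb
    refine hcomb.trans ?_
    apply mul_le_mul_of_nonneg_left _ (by positivity)
    exact pow_le_pow_left₀ hbase0 hbase2 j
  -- Step 7: (1/2)^j ≤ 2 * exp(-(ε log 2) n)
  have hhalf : ((1:ℝ)/2) ^ j ≤ 2 * Real.exp (-((ε*Real.log 2)*n)) := by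
    have hlog2 : (0:ℝ) < Real.log 2 := Real.log_pos (by norm_num)
    have e1 : ((1:ℝ)/2) ^ j = Real.exp (-((j:ℝ) * Real.log 2)) := by
      rw [show -((j:ℝ)*Real.log 2) = (j:ℝ)*(-Real.log 2) by ring, Real.exp_nat_mul,
        Real.exp_neg, Real.exp_log two_pos, one_div]
    rw [e1]
    have e2 : Real.exp (-((j:ℝ) * Real.log 2)) ≤
        Real.exp (-((ε * (n:ℝ) - 1) * Real.log 2)) := by
      apply Real.exp_le_exp.2
      rw [neg_le_neg_iff]
      apply mul_le_mul_of_nonneg_right _ hlog2.le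
      rw [hjcast]; linarith
    refine e2.trans ?_
    rw [show -((ε * (n:ℝ) - 1) * Real.log 2) = Real.log 2 + -((ε*Real.log 2)*(n:ℝ)) by ring,
      Real.exp_add, Real.exp_log (by norm_num)]
  calc phi n k p ≤ D * (n:ℝ) * ((1/2 : ℝ)) ^ j := hstep
    _ ≤ D * (n:ℝ) * (2 * Real.exp (-((ε*Real.log 2)*n))) := by
        apply mul_le_mul_of_nonneg_left hhalf (by positivity)
    _ = 2 * D * n * Real.exp (-((ε*Real.log 2)*n)) := by ring


lemma phi_nonneg (n k : ℕ) (p : ℝ) (hp0 : 0 ≤ p) (hp1 : p ≤ 1) : 0 ≤ phi n k p := by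
  unfold phi
  apply mul_nonneg (mul_nonneg (mul_nonneg (Nat.cast_nonneg _)
    (Real.rpow_nonneg (Nat.cast_nonneg _) _)) (pow_nonneg hp0 _))
    (pow_nonneg (by linarith) _)

theorem phi_small_for_linear_k (ε : ℝ) (hε : ε ∈ Set.Ioo (0 : ℝ) 1)
    (p : ℕ → ℝ) (hp : ∀ n, p n ∈ Set.Ioo (0 : ℝ) 1)
    (h1 : Tendsto (fun n : ℕ => (n : ℝ) * p n) atTop atTop) :
    Tendsto (fun n : ℕ =>
        sSup {x : ℝ | ∃ k : ℕ, ε * n ≤ (k : ℝ) ∧ k ≤ n ∧ x = phi n k (p n)})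
      atTop (nhds 0) := by
  obtain ⟨hε0, hε1⟩ := hε
  have hDpos : (0:ℝ) < (2:ℝ)^(1/ε) := Real.rpow_pos_of_pos two_pos _
  set g : ℕ → ℝ := fun n => 2 * (2:ℝ)^(1/ε) * n * Real.exp (-((ε*Real.log 2)*n)) with hg
  have hlog2 : (0:ℝ) < Real.log 2 := Real.log_pos one_lt_two
  have hgto : Tendsto g atTop (nhds 0) := by
    have h := (auxA (ε*Real.log 2) (by positivity)).comp
      (tendsto_natCast_atTop_atTop (R := ℝ))
    have h2 := h.const_mul (2 * (2:ℝ)^(1/ε))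
    have hfe : g = fun n : ℕ => 2 * (2:ℝ)^(1/ε) *
        ((fun x : ℝ => x * Real.exp (-((ε*Real.log 2) * x))) ((n:ℕ) : ℝ)) := by
      funext n; simp [hg]; ring
    rw [hfe]
    simpa using h2
  have E1 : ∀ᶠ n : ℕ in atTop, 4 ≤ ε * (n:ℝ) := by
    have ht : Tendsto (fun n : ℕ => ε * (n:ℝ)) atTop atTop :=
      (tendsto_natCast_atTop_atTop (R := ℝ)).const_mul_atTop hε0
    exact ht.eventually_ge_atTop 4
  have E2 : ∀ᶠ n : ℕ in atTop,
      (2:ℝ)^(1/ε) * ((n:ℝ) * p n) * Real.exp (-(ε*((n:ℝ) * p n))/4) ≤ 1/2 := by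
    have hfun : Tendsto (fun x : ℝ => (2:ℝ)^(1/ε) * x * Real.exp (-(ε*x)/4))
        atTop (nhds 0) := by
      have hfe : (fun x : ℝ => (2:ℝ)^(1/ε) * x * Real.exp (-(ε*x)/4))
          = fun x : ℝ => (2:ℝ)^(1/ε) * (x * Real.exp (-((ε/4) * x))) := by
        funext x
        rw [show -(ε*x)/4 = -((ε/4)*x) by ring]
        ring
      rw [hfe]
      simpa using (auxA (ε/4) (by positivity)).const_mul ((2:ℝ)^(1/ε))
    exact (hfun.comp h1).eventually (eventually_le_nhds (by norm_num : (0:ℝ) < 1/2))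
  apply tendsto_of_tendsto_of_tendsto_of_le_of_le' tendsto_const_nhds hgto
  · filter_upwards [E1, E2] with n hn1 hn2
    have memS : phi n n (p n) ∈
        {x : ℝ | ∃ k : ℕ, ε * n ≤ (k : ℝ) ∧ k ≤ n ∧ x = phi n k (p n)} :=
      ⟨n, mul_le_of_le_one_left (Nat.cast_nonneg n) hε1.le, le_rfl, rfl⟩
    have key : ∀ x ∈ {x : ℝ | ∃ k : ℕ, ε * n ≤ (k : ℝ) ∧ k ≤ n ∧ x = phi n k (p n)},
        x ≤ g n := by
      rintro x ⟨k, hkk1, hkk2, rfl⟩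
      exact phi_le ε hε0 n k (p n) (hp n).1 (hp n).2 hn1 hn2 hkk1 hkk2
    have bdd : BddAbove {x : ℝ | ∃ k : ℕ, ε * n ≤ (k : ℝ) ∧ k ≤ n ∧ x = phi n k (p n)} :=
      ⟨g n, key⟩
    exact le_trans (phi_nonneg n n (p n) (hp n).1.le (hp n).2.le) (le_csSup bdd memS)
  · filter_upwards [E1, E2] with n hn1 hn2
    have memS : phi n n (p n) ∈
        {x : ℝ | ∃ k : ℕ, ε * n ≤ (k : ℝ) ∧ k ≤ n ∧ x = phi n k (p n)} :=
      ⟨n, mul_le_of_le_one_left (Nat.cast_nonneg n) hε1.le, le_rfl, rfl⟩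
    have key : ∀ x ∈ {x : ℝ | ∃ k : ℕ, ε * n ≤ (k : ℝ) ∧ k ≤ n ∧ x = phi n k (p n)},
        x ≤ g n := by
      rintro x ⟨k, hkk1, hkk2, rfl⟩
      exact phi_le ε hε0 n k (p n) (hp n).1 (hp n).2 hn1 hn2 hkk1 hkk2
    exact csSup_le ⟨_, memS⟩ key
end

section
/- Let n ≥ k ≥ 2 be integers, p ∈ (0,1), and let A, B ⊆ {1,…,n} with |A| = |B| = k and ℓ := |A ∩ B| ∈ {1,…,k−1}. Let T_A be a tree with vertex set A and T_B a tree with vertex set B whose edge sets agree on pairs of vertices from A ∩ B, and suppose the induced forest T_A[A ∩ B] has exactly m connected components. If (k−ℓ)·p < 1 and 2(k−ℓ) − m + 1 > 0, then in G_{n,p} the probability of the event {G[A] = T_A, G[B] = T_B, every vertex outside A has at least 3 neighbors in A, and every vertex outside B has at least 3 neighbors in B} is at most ((k−ℓ)·p)^{2(k−ℓ)−m+1} times the probability of the event {G[A] = T_A and G[B] = T_B}. -/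
open scoped Classical
open MeasureTheory Filter

/-- Bernoulli measure on `Bool` with success probability `p`. -/
noncomputable def bern (p : ℝ) : Measure Bool :=
  (ENNReal.ofReal p) • Measure.dirac true + (ENNReal.ofReal (1 - p)) • Measure.dirac false

/-- The binomial random graph measure `G_{n,p}`. -/
noncomputable def gnp (n : ℕ) (p : ℝ) : Measure (Sym2 (Fin n) → Bool) :=
  Measure.pi fun _ => bern p

/-- The simple graph determined by an outcome `ω`. -/
def graphOf {n : ℕ} (ω : Sym2 (Fin n) → Bool) : SimpleGraph (Fin n) where
  Adj u v := u ≠ v ∧ ω s(u, v) = true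
  symm := ⟨fun u v h => ⟨h.1.symm, by rw [Sym2.eq_swap]; exact h.2⟩⟩
  loopless := ⟨fun u h => h.1 rfl⟩

/-- `G[A] = T`: the induced subgraph of `G` on `A` has exactly the edges of `T`. -/
def inducedEq {n : ℕ} (G T : SimpleGraph (Fin n)) (A : Finset (Fin n)) : Prop :=
  ∀ u ∈ A, ∀ v ∈ A, (G.Adj u v ↔ T.Adj u v)

/-- Every vertex outside `A` has at least 3 neighbors in `A`. -/
def threeNbrs {n : ℕ} (G : SimpleGraph (Fin n)) (A : Finset (Fin n)) : Prop :=
  ∀ v ∉ A, 3 ≤ (A.filter fun u => G.Adj v u).card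


/-!
A vertex `v ∈ B \ A` sees exactly its `T_B`-neighbours in `A ∩ B`, say `d v` of them, so on
the event it needs at least `3 - d v` neighbours in `A \ B`. These requirements concern the
pairs between `v` and `A \ B`, which are disjoint for distinct `v` and from the pairs inside `A`
or `B`; so they are independent of each other and of `{G[A] = T_A, G[B] = T_B}`, and by a union
bound each has probability at most `((k - ℓ) p) ^ (3 - d v)`. Of the `k - 1` edges of `T_B` at
least `ℓ - m` lie inside `A ∩ B`, hence `∑ d v ≤ (k - ℓ) + m - 1` and the exponents add up to at
least `2 (k - ℓ) - m + 1`.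
-/

open Finset

theorem dependsOn_mem_biInter {ι κ : Type*} {α : ι → Type*} {J : Finset κ}
    {S : κ → Set (∀ i, α i)} {t : Set ι} (h : ∀ j ∈ J, DependsOn (· ∈ S j) t) :
    DependsOn (· ∈ ⋂ j ∈ J, S j) t :=
  fun x y hxy => by
    simp only [Set.mem_iInter₂]
    exact propext (forall₂_congr fun j hj => (h j hj hxy).to_iff)

theorem dependsOn_le_card_filter_mem {ι α : Type*} (I : Finset ι) (s : Set α)
    [DecidablePred (· ∈ s)] (r : ℕ) :
    DependsOn (· ∈ {ω : ι → α | r ≤ #{i ∈ I | ω i ∈ s}}) I := fun x y hxy =>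
  congrArg (fun J => r ≤ #J) (filter_congr fun i hi => by rw [hxy i hi])

section ProductMeasure

variable {ι : Type*} [Fintype ι] {α : ι → Type*} [∀ i, MeasurableSpace (α i)]
  {μ : ∀ i, Measure (α i)} [∀ i, IsProbabilityMeasure (μ i)]

theorem measure_pi_inter_of_dependsOn_compl {c : Set ι} {S T : Set (∀ i, α i)}
    (hS : DependsOn (· ∈ S) c) (hT : DependsOn (· ∈ T) cᶜ) :
    Measure.pi μ (S ∩ T) = Measure.pi μ S * Measure.pi μ T := by
  obtain ⟨S', hS'⟩ := dependsOn_iff_exists_comp.1 hS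
  obtain ⟨T', hT'⟩ := dependsOn_iff_exists_comp.1 hT
  let e := MeasurableEquiv.piEquivPiSubtypeProd α (· ∈ c)
  have hpi : ∀ U V, Measure.pi μ (e ⁻¹' (U ×ˢ V)) =
      Measure.pi (fun i : c => μ i) U * Measure.pi (fun i : ↥cᶜ => μ i) V := fun U V =>
    ((measurePreserving_piEquivPiSubtypeProd μ (· ∈ c)).measure_preimage_equiv _).trans
      (Measure.prod_prod U V)
  have hS_eq : S = e ⁻¹' ({x | S' x} ×ˢ Set.univ) := by
    ext ω; exact (congrFun hS' ω).to_iff.trans (by simp; rfl)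
  have hT_eq : T = e ⁻¹' (Set.univ ×ˢ {x | T' x}) := by
    ext ω; exact (congrFun hT' ω).to_iff.trans (by simp; rfl)
  have hST_eq : S ∩ T = e ⁻¹' ({x | S' x} ×ˢ {x | T' x}) := by
    rw [hS_eq, hT_eq, ← Set.preimage_inter, Set.prod_inter_prod]; simp
  rw [hST_eq, hS_eq, hT_eq, hpi, hpi, hpi]
  simp

theorem measure_pi_biInter_of_dependsOn {κ : Type*} {J : Finset κ} {c : κ → Set ι}
    {S : κ → Set (∀ i, α i)} (hc : (J : Set κ).PairwiseDisjoint c)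
    (hS : ∀ j ∈ J, DependsOn (· ∈ S j) (c j)) :
    Measure.pi μ (⋂ j ∈ J, S j) = ∏ j ∈ J, Measure.pi μ (S j) := by
  induction J using Finset.induction_on with
  | empty => simp
  | insert a J ha ih =>
    have hJ : ∀ j ∈ J, DependsOn (· ∈ S j) (c a)ᶜ := fun j hj =>
      (hS j (mem_insert_of_mem hj)).mono <| Disjoint.subset_compl_right <|
        hc (mem_insert_of_mem hj) (mem_insert_self a J) (ne_of_mem_of_not_mem hj ha)
    rw [set_biInter_insert, prod_insert ha, measure_pi_inter_of_dependsOn_compl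
        (hS a (mem_insert_self a J)) (dependsOn_mem_biInter hJ),
      ih (hc.subset (by simp)) fun j hj => hS j (mem_insert_of_mem hj)]

end ProductMeasure

section IndependentCoordinates

variable {ι α : Type*} [Fintype ι] [MeasurableSpace α] (ν : Measure α)
  [IsProbabilityMeasure ν]

theorem measure_pi_forall_mem (I : Finset ι) (s : Set α) :
    Measure.pi (fun _ : ι => ν) {ω | ∀ i ∈ I, ω i ∈ s} = ν s ^ #I := by
  have : {ω : ι → α | ∀ i ∈ I, ω i ∈ s} = (I : Set ι).pi fun _ => s := by
    ext; simp [Set.mem_pi]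
  rw [this, Measure.pi_pi_finset, prod_const]

theorem measure_pi_le_card_filter_mem_le (I : Finset ι) (s : Set α) [DecidablePred (· ∈ s)]
    (r : ℕ) :
    Measure.pi (fun _ : ι => ν) {ω | r ≤ #{i ∈ I | ω i ∈ s}} ≤
      (#I).choose r * ν s ^ r := by
  have hcover : {ω : ι → α | r ≤ #{i ∈ I | ω i ∈ s}} ⊆
      ⋃ J ∈ I.powersetCard r, {ω | ∀ i ∈ J, ω i ∈ s} := by
    intro ω hω
    obtain ⟨J, hJ, hJr⟩ := exists_subset_card_eq hω
    exact Set.mem_biUnion (mem_powersetCard.2 ⟨hJ.trans (filter_subset _ _), hJr⟩)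
      fun i hi => (mem_filter.1 (hJ hi)).2
  calc _ ≤ ∑ J ∈ I.powersetCard r, Measure.pi (fun _ => ν)
          {ω : ι → α | ∀ i ∈ J, ω i ∈ s} :=
        (measure_mono hcover).trans (measure_biUnion_finset_le _ _)
    _ = (#I).choose r * ν s ^ r := by
        rw [sum_congr rfl fun J hJ => by rw [measure_pi_forall_mem, (mem_powersetCard.1 hJ).2],
          sum_const, card_powersetCard, nsmul_eq_mul]

end IndependentCoordinates

theorem isProbabilityMeasure_bern {p : ℝ} (h0 : 0 ≤ p) (h1 : p ≤ 1) :
    IsProbabilityMeasure (bern p) :=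
  ⟨by simp [bern, ← ENNReal.ofReal_add h0 (sub_nonneg.2 h1)]⟩

theorem bern_singleton_true (p : ℝ) : bern p {true} = ENNReal.ofReal p := by
  simp [bern]

theorem measure_pi_bern_le_card_filter_le {ι : Type*} [Fintype ι] {p : ℝ} (hp0 : 0 ≤ p)
    (hp1 : p ≤ 1) (I : Finset ι) (r : ℕ) :
    Measure.pi (fun _ : ι => bern p) {ω | r ≤ #{i ∈ I | ω i ∈ ({true} : Set Bool)}} ≤
      ENNReal.ofReal (#I * p) ^ r := by
  have := isProbabilityMeasure_bern hp0 hp1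
  calc _ ≤ (#I).choose r * bern p {true} ^ r := measure_pi_le_card_filter_mem_le _ _ _ _
    _ ≤ (#I : ENNReal) ^ r * ENNReal.ofReal p ^ r := by
        rw [bern_singleton_true]
        gcongr
        exact_mod_cast Nat.choose_le_pow _ _
    _ = ENNReal.ofReal (#I * p) ^ r := by
        rw [ENNReal.ofReal_mul (Nat.cast_nonneg _), ENNReal.ofReal_natCast, mul_pow]

namespace SimpleGraph

variable {V : Type*} (G : SimpleGraph V)

theorem reachable_deleteEdges_or_of_reachable {u w : V} (h : G.Reachable u w) (x y : V) :
    (G.deleteEdges {s(x, y)}).Reachable u w ∨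
      ((G.deleteEdges {s(x, y)}).Reachable u x ∧ (G.deleteEdges {s(x, y)}).Reachable y w) ∨
      ((G.deleteEdges {s(x, y)}).Reachable u y ∧ (G.deleteEdges {s(x, y)}).Reachable x w) := by
  obtain ⟨q⟩ := h
  induction q with
  | nil => exact .inl .rfl
  | @cons a b _ hab _ ih =>
    by_cases he : s(a, b) = s(x, y)
    · rcases Sym2.eq_iff.1 he with ⟨rfl, rfl⟩ | ⟨rfl, rfl⟩
      · rcases ih with h | ⟨h₁, h₂⟩ | ⟨_, h₂⟩
        exacts [.inr (.inl ⟨.rfl, h⟩), .inl (h₁.symm.trans h₂), .inl h₂]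
      · rcases ih with h | ⟨_, h₂⟩ | ⟨h₁, h₂⟩
        exacts [.inr (.inr ⟨.rfl, h⟩), .inl h₂, .inl (h₁.symm.trans h₂)]
    · have hab' : (G.deleteEdges {s(x, y)}).Adj a b := (deleteEdges_adj ..).2 ⟨hab, he⟩
      rcases ih with h | ⟨h₁, h₂⟩ | ⟨h₁, h₂⟩
      exacts [.inl (hab'.reachable.trans h), .inr (.inl ⟨hab'.reachable.trans h₁, h₂⟩),
        .inr (.inr ⟨hab'.reachable.trans h₁, h₂⟩)]

theorem card_connectedComponent_deleteEdges_le [Finite V] (x y : V) :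
    Nat.card (G.deleteEdges {s(x, y)}).ConnectedComponent ≤
      Nat.card G.ConnectedComponent + 1 := by
  set G' := G.deleteEdges {s(x, y)}
  let φ : G'.ConnectedComponent → G.ConnectedComponent :=
    ConnectedComponent.map (Hom.ofLE (deleteEdges_le _))
  -- `φ` can only identify the component of `y` with another one.
  have hinj : Set.InjOn φ {G'.connectedComponentMk y}ᶜ := by
    intro C₁ h₁ C₂ h₂ h
    induction C₁ using ConnectedComponent.ind with | h u => ?_
    induction C₂ using ConnectedComponent.ind with | h w => ?_
    simp only [Set.mem_compl_iff, Set.mem_singleton_iff, ConnectedComponent.eq] at h₁ h₂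
    rcases G.reachable_deleteEdges_or_of_reachable (ConnectedComponent.exact h) x y with
      h | ⟨_, h⟩ | ⟨h, _⟩
    exacts [ConnectedComponent.sound h, (h₂ h.symm).elim, (h₁ h).elim]
  have hle := Set.ncard_le_ncard_of_injOn φ (fun _ _ => Set.mem_univ _) hinj
  have hcompl := Set.ncard_add_ncard_compl {G'.connectedComponentMk y}
  rw [Set.ncard_univ] at hle
  rw [Set.ncard_singleton] at hcompl
  omega

theorem card_le_card_edgeSet_add_card_connectedComponent [Finite V] :
    Nat.card V ≤ Nat.card G.edgeSet + Nat.card G.ConnectedComponent := by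
  induction hN : Nat.card G.edgeSet generalizing G with
  | zero =>
    obtain rfl : G = ⊥ := edgeSet_eq_empty.1 ((Set.ncard_eq_zero).1 hN)
    rw [zero_add]
    exact Nat.card_le_card_of_injective _ fun u v h => reachable_bot.1 (ConnectedComponent.exact h)
  | succ N ih =>
    obtain ⟨e, he⟩ :=
      Set.nonempty_of_ncard_ne_zero (s := G.edgeSet) (by simp [← Nat.card_coe_set_eq, hN])
    induction e using Sym2.ind with | h x y => ?_
    have hN' : Nat.card (G.deleteEdges {s(x, y)}).edgeSet = N := by
      rw [Nat.card_coe_set_eq, edgeSet_deleteEdges, Set.ncard_sdiff_singleton_of_mem he,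
        ← Nat.card_coe_set_eq, hN, Nat.add_sub_cancel]
    have := ih _ hN'
    have := G.card_connectedComponent_deleteEdges_le x y
    omega

section Finite

variable [Fintype V] [DecidableEq V]

theorem card_edgeFinset_induce_eq_card_inter_sym2 (C : Finset V) :
    #(G.induce (C : Set V)).edgeFinset = #(G.edgeFinset ∩ C.sym2) := by
  have h := congrArg card (map_edgeFinset_induce (G := G) (s := (C : Set V)))
  rw [card_map, toFinset_coe] at h
  convert h

theorem card_edgeFinset_induce_add_sum_card_adj_le {C D : Finset V} (hCD : Disjoint C D) :
    #(G.induce (C : Set V)).edgeFinset + ∑ v ∈ D, #{u ∈ C | G.Adj v u} ≤ #G.edgeFinset := by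
  set X := {z ∈ D ×ˢ C | G.Adj z.1 z.2}
  have hX : ∑ v ∈ D, #{u ∈ C | G.Adj v u} = #(X.image fun z => s(z.1, z.2)) := by
    rw [card_image_of_injOn, card_filter, sum_product]
    · simp only [card_filter]
    rintro ⟨v, u⟩ hvu ⟨v', u'⟩ hvu' h
    simp only [X, coe_filter, mem_product] at hvu hvu'
    rcases Sym2.eq_iff.1 h with ⟨rfl, rfl⟩ | ⟨rfl, -⟩
    exacts [rfl, absurd hvu.1.1 (Finset.disjoint_left.1 hCD hvu'.1.2)]
  have hsub : X.image (fun z => s(z.1, z.2)) ⊆ G.edgeFinset \ C.sym2 := by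
    intro e he
    obtain ⟨⟨v, u⟩, hvu, rfl⟩ := mem_image.1 he
    simp only [X, mem_filter, mem_product] at hvu
    simp only [Finset.mem_sdiff, mem_edgeFinset, mem_edgeSet, mk_mem_sym2_iff]
    exact ⟨hvu.2, fun h => Finset.disjoint_left.1 hCD h.1 hvu.1.1⟩
  rw [card_edgeFinset_induce_eq_card_inter_sym2, hX,
    ← card_inter_add_card_sdiff G.edgeFinset C.sym2]
  exact Nat.add_le_add_left (card_le_card hsub) _

theorem sum_card_adj_add_card_le_of_isTree {B C : Finset V} (hG : G.support ⊆ B)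
    (hT : (G.induce (B : Set V)).IsTree) :
    ∑ v ∈ B \ C, #{u ∈ C | G.Adj v u} + #C + 1 ≤
      #B + Nat.card (G.induce (C : Set V)).ConnectedComponent := by
  have hedges : #G.edgeFinset + 1 = #B := by
    rw [← card_edgeFinset_induce_of_support_subset hG]
    convert hT.card_edgeFinset
    simp
  have hcross := G.card_edgeFinset_induce_add_sum_card_adj_le (disjoint_sdiff (s := C) (t := B))
  have hforest := (G.induce (C : Set V)).card_le_card_edgeSet_add_card_connectedComponent
  rw [Nat.card_coe_set_eq, Set.ncard_coe_finset, Nat.card_eq_fintype_card, ← edgeFinset_card]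
    at hforest
  omega

theorem two_mul_card_sdiff_add_one_le_of_isTree {A B : Finset V} (hG : G.support ⊆ B)
    (hT : (G.induce (B : Set V)).IsTree) :
    2 * #(B \ A) + 1 ≤ ∑ v ∈ B \ A, (3 - #{u ∈ A ∩ B | G.Adj v u}) +
      Nat.card (G.induce ((A ∩ B : Finset V) : Set V)).ConnectedComponent := by
  have hcross := G.sum_card_adj_add_card_le_of_isTree (C := A ∩ B) hG hT
  have htsub : ∑ v ∈ B \ A, 3 ≤
      ∑ v ∈ B \ A, (3 - #{u ∈ A ∩ B | G.Adj v u} + #{u ∈ A ∩ B | G.Adj v u}) :=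
    sum_le_sum fun v _ => le_tsub_add
  have hB := card_sdiff_add_card_inter B A
  rw [Finset.sdiff_inter_self_right] at hcross
  rw [sum_add_distrib, sum_const, smul_eq_mul] at htsub
  rw [inter_comm] at hB
  omega

end Finite

end SimpleGraph

section Sym2

variable {α : Type*} [DecidableEq α]

theorem coe_image_mk_subset_compl_sym2_union {A B W : Finset α} {v : α} (hvA : v ∉ A)
    (hWB : Disjoint W B) :
    (↑(W.image (s(v, ·))) : Set (Sym2 α)) ⊆ (↑(A.sym2 ∪ B.sym2))ᶜ := by
  intro e he
  obtain ⟨u, hu, rfl⟩ := mem_image.1 he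
  simp [hvA, Finset.disjoint_left.1 hWB hu]

theorem pairwiseDisjoint_coe_image_mk {D W : Finset α} (hDW : Disjoint D W) :
    (D : Set α).PairwiseDisjoint fun v => (↑(W.image (s(v, ·))) : Set (Sym2 α)) := by
  intro v hv w _ hvw
  refine Set.disjoint_left.2 fun e he he' => ?_
  obtain ⟨u, hu, rfl⟩ := mem_image.1 he
  obtain ⟨u', hu', h⟩ := mem_image.1 he'
  rcases Sym2.eq_iff.1 h with ⟨rfl, -⟩ | ⟨-, rfl⟩
  exacts [hvw rfl, Finset.disjoint_left.1 hDW hv hu']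

end Sym2

section RandomGraph

variable {n : ℕ}

theorem dependsOn_inducedEq_graphOf (T : SimpleGraph (Fin n)) (A : Finset (Fin n)) :
    DependsOn (fun ω => inducedEq (graphOf ω) T A) (A.sym2 : Set (Sym2 (Fin n))) :=
  fun x y hxy => propext <| forall₂_congr fun u hu => forall₂_congr fun v hv => by
    simp only [graphOf, hxy _ (mk_mem_sym2_iff.2 ⟨hu, hv⟩)]

theorem card_filter_graphOf_adj (ω : Sym2 (Fin n) → Bool) {v : Fin n} {W : Finset (Fin n)}
    (hv : v ∉ W) :
    #{u ∈ W | (graphOf ω).Adj v u} =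
      #{e ∈ W.image (s(v, ·)) | ω e ∈ ({true} : Set Bool)} := by
  rw [filter_image, card_image_of_injOn fun _ _ _ _ h => Sym2.congr_right.1 h]
  congr 1
  exact filter_congr fun u hu => by simp [graphOf, (ne_of_mem_of_not_mem hu hv).symm]

theorem three_le_card_filter_adj_add_card_filter_adj {G T : SimpleGraph (Fin n)} {A B : Finset (Fin n)}
    (hGB : inducedEq G T B) (hGA : threeNbrs G A) {v : Fin n} (hv : v ∈ B \ A) :
    3 ≤ #{u ∈ A ∩ B | T.Adj v u} + #{u ∈ A \ B | G.Adj v u} := by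
  obtain ⟨hvB, hvA⟩ := Finset.mem_sdiff.1 hv
  calc 3 ≤ #{u ∈ A | G.Adj v u} := hGA v hvA
    _ = #{u ∈ A ∩ B | G.Adj v u} + #{u ∈ A \ B | G.Adj v u} := by
        rw [add_comm, ← card_union_of_disjoint
          (disjoint_filter_filter (disjoint_sdiff_inter A B)), ← filter_union, sdiff_union_inter]
    _ = #{u ∈ A ∩ B | T.Adj v u} + #{u ∈ A \ B | G.Adj v u} := by
        rw [filter_congr fun u hu => hGB v hvB u (mem_inter.1 hu).2]

theorem gnp_inducedEq_threeNbrs_le {p : ℝ} (hp0 : 0 ≤ p) (hp1 : p ≤ 1)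
    (A B : Finset (Fin n)) (TA TB : SimpleGraph (Fin n)) :
    gnp n p {ω | inducedEq (graphOf ω) TA A ∧ inducedEq (graphOf ω) TB B ∧
        threeNbrs (graphOf ω) A} ≤
      gnp n p {ω | inducedEq (graphOf ω) TA A ∧ inducedEq (graphOf ω) TB B} *
        ∏ v ∈ B \ A, ENNReal.ofReal (#(A \ B) * p) ^ (3 - #{u ∈ A ∩ B | TB.Adj v u}) := by
  have := isProbabilityMeasure_bern hp0 hp1
  set S₀ := {ω : Sym2 (Fin n) → Bool |
    inducedEq (graphOf ω) TA A ∧ inducedEq (graphOf ω) TB B}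
  set I : Fin n → Finset (Sym2 (Fin n)) := fun v => (A \ B).image (s(v, ·))
  set r : Fin n → ℕ := fun v => 3 - #{u ∈ A ∩ B | TB.Adj v u}
  set S : Fin n → Set (Sym2 (Fin n) → Bool) :=
    fun v => {ω | r v ≤ #{e ∈ I v | ω e ∈ ({true} : Set Bool)}}
  have hsub : {ω | inducedEq (graphOf ω) TA A ∧ inducedEq (graphOf ω) TB B ∧
      threeNbrs (graphOf ω) A} ⊆ S₀ ∩ ⋂ v ∈ B \ A, S v := by
    rintro ω ⟨hTA, hTB, hthree⟩
    refine ⟨⟨hTA, hTB⟩, Set.mem_iInter₂.2 fun v hv => ?_⟩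
    have := three_le_card_filter_adj_add_card_filter_adj hTB hthree hv
    rw [card_filter_graphOf_adj ω fun h => (Finset.mem_sdiff.1 h).2 (Finset.mem_sdiff.1 hv).1]
      at this
    exact tsub_le_iff_left.2 this
  have hS₀ : DependsOn (· ∈ S₀) ↑(A.sym2 ∪ B.sym2) := fun x y hxy =>
    congrArg₂ And
      (dependsOn_inducedEq_graphOf TA A fun e he => hxy e (coe_subset.2 subset_union_left he))
      (dependsOn_inducedEq_graphOf TB B fun e he => hxy e (coe_subset.2 subset_union_right he))
  have hI : ∀ v ∈ B \ A, (I v : Set (Sym2 (Fin n))) ⊆ (↑(A.sym2 ∪ B.sym2))ᶜ := fun v hv =>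
    coe_image_mk_subset_compl_sym2_union (Finset.mem_sdiff.1 hv).2 sdiff_disjoint
  have hcardI : ∀ v, #(I v) = #(A \ B) := fun v =>
    card_image_of_injOn fun _ _ _ _ h => Sym2.congr_right.1 h
  calc _ ≤ gnp n p (S₀ ∩ ⋂ v ∈ B \ A, S v) := measure_mono hsub
    _ = gnp n p S₀ * ∏ v ∈ B \ A, gnp n p (S v) := by
        rw [gnp, measure_pi_inter_of_dependsOn_compl hS₀ (dependsOn_mem_biInter (S := S)
            fun v hv => (dependsOn_le_card_filter_mem (I v) {true} (r v)).mono (hI v hv)),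
          measure_pi_biInter_of_dependsOn (S := S)
            (pairwiseDisjoint_coe_image_mk disjoint_sdiff_sdiff) fun v _ =>
            dependsOn_le_card_filter_mem (I v) {true} (r v)]
    _ ≤ _ := by
        gcongr with v
        exact hcardI v ▸ measure_pi_bern_le_card_filter_le hp0 hp1 (I v) (r v)

end RandomGraph

theorem restricted_vs_unrestricted_pair_probability_general
    (n k ℓ m : ℕ) (p : ℝ) (hp : p ∈ Set.Ioo (0 : ℝ) 1)
    (A B : Finset (Fin n)) (hA : A.card = k) (hB : B.card = k)
    (hl : (A ∩ B).card = ℓ)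
    (TA TB : SimpleGraph (Fin n))
    (hTBe : ∀ u v, TB.Adj u v → u ∈ B ∧ v ∈ B)
    (hTBt : (TB.induce (B : Set (Fin n))).IsTree)
    (hagree : ∀ u ∈ A ∩ B, ∀ v ∈ A ∩ B, (TA.Adj u v ↔ TB.Adj u v))
    (hm : Nat.card (TA.induce ((A ∩ B : Finset (Fin n)) : Set (Fin n))).ConnectedComponent = m)
    (hsmall : ((k : ℝ) - ℓ) * p < 1)
    (hpos : 0 < 2 * ((k : ℤ) - ℓ) - m + 1) :
    gnp n p {ω | inducedEq (graphOf ω) TA A ∧ inducedEq (graphOf ω) TB B ∧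
        threeNbrs (graphOf ω) A ∧ threeNbrs (graphOf ω) B} ≤
      ENNReal.ofReal ((((k : ℝ) - ℓ) * p) ^ (2 * (k - ℓ) - m + 1)) *
        gnp n p {ω | inducedEq (graphOf ω) TA A ∧ inducedEq (graphOf ω) TB B} := by
  obtain ⟨hp0, hp1⟩ := hp
  have hℓk : ℓ ≤ k := hl ▸ hA ▸ card_le_card inter_subset_left
  have hAB : #(A \ B) = k - ℓ := by have := card_sdiff_add_card_inter A B; omega
  have hBA : #(B \ A) = k - ℓ := by
    have := card_sdiff_add_card_inter B A; rw [inter_comm] at this; omega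
  have hind : TA.induce ↑(A ∩ B) = TB.induce ↑(A ∩ B) := by
    ext ⟨u, hu⟩ ⟨v, hv⟩; exact hagree u hu v hv
  have hexp : 2 * (k - ℓ) - m + 1 ≤ ∑ v ∈ B \ A, (3 - #{u ∈ A ∩ B | TB.Adj v u}) := by
    have := TB.two_mul_card_sdiff_add_one_le_of_isTree (A := A)
      (fun u ⟨v, huv⟩ => (hTBe u v huv).1) hTBt
    rw [← hind, hm, hBA] at this
    omega
  calc _ ≤ gnp n p {ω | inducedEq (graphOf ω) TA A ∧ inducedEq (graphOf ω) TB B ∧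
          threeNbrs (graphOf ω) A} := measure_mono fun ω h => ⟨h.1, h.2.1, h.2.2.1⟩
    _ ≤ _ := gnp_inducedEq_threeNbrs_le hp0.le hp1.le A B TA TB
    _ = ENNReal.ofReal (((k : ℝ) - ℓ) * p) ^
            (∑ v ∈ B \ A, (3 - #{u ∈ A ∩ B | TB.Adj v u})) *
          gnp n p {ω | inducedEq (graphOf ω) TA A ∧ inducedEq (graphOf ω) TB B} := by
        rw [prod_pow_eq_pow_sum, hAB, Nat.cast_sub hℓk, mul_comm]
    _ ≤ _ := by
        rw [ENNReal.ofReal_pow (mul_nonneg (sub_nonneg.2 (Nat.cast_le.2 hℓk)) hp0.le)]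
        exact mul_le_mul_left (pow_le_pow_of_le_one zero_le
          (ENNReal.ofReal_le_one.2 hsmall.le) hexp) _

theorem restricted_vs_unrestricted_pair_probability
    (n k ℓ m : ℕ) (hk : 2 ≤ k) (hkn : k ≤ n) (p : ℝ) (hp : p ∈ Set.Ioo (0 : ℝ) 1)
    (A B : Finset (Fin n)) (hA : A.card = k) (hB : B.card = k)
    (hl : (A ∩ B).card = ℓ) (hl1 : 1 ≤ ℓ) (hl2 : ℓ ≤ k - 1)
    (TA TB : SimpleGraph (Fin n))
    (hTAe : ∀ u v, TA.Adj u v → u ∈ A ∧ v ∈ A)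
    (hTAt : (TA.induce (A : Set (Fin n))).IsTree)
    (hTBe : ∀ u v, TB.Adj u v → u ∈ B ∧ v ∈ B)
    (hTBt : (TB.induce (B : Set (Fin n))).IsTree)
    (hagree : ∀ u ∈ A ∩ B, ∀ v ∈ A ∩ B, (TA.Adj u v ↔ TB.Adj u v))
    (hm : Nat.card (TA.induce ((A ∩ B : Finset (Fin n)) : Set (Fin n))).ConnectedComponent = m)
    (hsmall : ((k : ℝ) - ℓ) * p < 1)
    (hpos : 0 < 2 * ((k : ℤ) - ℓ) - m + 1) :
    gnp n p {ω | inducedEq (graphOf ω) TA A ∧ inducedEq (graphOf ω) TB B ∧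
        threeNbrs (graphOf ω) A ∧ threeNbrs (graphOf ω) B} ≤
      ENNReal.ofReal ((((k : ℝ) - ℓ) * p) ^ (2 * (k - ℓ) - m + 1)) *
        gnp n p {ω | inducedEq (graphOf ω) TA A ∧ inducedEq (graphOf ω) TB B} :=
  restricted_vs_unrestricted_pair_probability_general n k ℓ m p hp A B hA hB hl TA TB hTBe hTBt
    hagree hm hsmall hpos
end

section
/- Let n ≥ k ≥ 2 be integers, p ∈ (0,1), and let A, B ⊆ {1,…,n} with |A| = |B| = k and ℓ := |A ∩ B| ∈ {1,…,k−1}. Let T_A be a tree with vertex set A and T_B a tree with vertex set B whose edge sets agree on pairs of vertices from A ∩ B, and suppose the induced forest T_A[A ∩ B] has exactly m connected components. Then in G_{n,p}, Pr[G[A] = T_A and G[B] = T_B] = (p/(1−p))^{2k−ℓ+m−2} · (1−p)^{2·k(k−1)/2 − ℓ(ℓ−1)/2}. -/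
open scoped Classical
open MeasureTheory Filter

/-!
The event fixes the state of every pair inside `A` or inside `B`: such a pair must be present
exactly when it is an edge of `T_A ∪ T_B`. So its probability is `p ^ e * (1 - p) ^ (N - e)`,
with `N = 2 * C(k, 2) - C(ℓ, 2)` pairs and `e = |E(T_A) ∪ E(T_B)|`. The common edges of the two
trees are exactly the edges of the forest `T_A[A ∩ B]`, of which there are `ℓ - m` (a forest has
as many vertices as edges plus components), so `e = 2 * (k - 1) - (ℓ - m)`.
-/

open Finset

section Bernoulli

variable {p : ℝ}

lemma bern_singleton (p : ℝ) (b : Bool) :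
    bern p {b} = if b then ENNReal.ofReal p else ENNReal.ofReal (1 - p) := by
  cases b <;> simp [bern]

lemma isProbabilityMeasure_bern_s12 (hp0 : 0 ≤ p) (hp1 : p ≤ 1) : IsProbabilityMeasure (bern p) :=
  ⟨by simp [bern, ← ENNReal.ofReal_add hp0 (sub_nonneg.2 hp1)]⟩

lemma measure_pi_bern_eq_decide_mem {ι : Type*} [Fintype ι] [DecidableEq ι] (hp0 : 0 ≤ p)
    (hp1 : p ≤ 1) {S E : Finset ι} (hES : E ⊆ S) :
    Measure.pi (fun _ : ι => bern p) {ω | ∀ i ∈ S, ω i = decide (i ∈ E)} =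
      ENNReal.ofReal p ^ #E * ENNReal.ofReal (1 - p) ^ (#S - #E) := by
  have := isProbabilityMeasure_bern_s12 hp0 hp1
  have hcyl : {ω : ι → Bool | ∀ i ∈ S, ω i = decide (i ∈ E)} =
      Set.univ.pi fun i => if i ∈ S then {decide (i ∈ E)} else Set.univ := by
    ext ω
    simp only [Set.mem_ofPred_eq, Set.mem_pi, Set.mem_univ, true_implies]
    refine forall_congr' fun i => ?_
    split_ifs <;> simp_all
  have hfactor : ∀ i, bern p (if i ∈ S then {decide (i ∈ E)} else Set.univ) =
      if i ∈ S then (if i ∈ E then ENNReal.ofReal p else ENNReal.ofReal (1 - p)) else 1 := by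
    intro i
    by_cases hi : i ∈ S
    · by_cases hiE : i ∈ E <;> simp [hi, hiE, bern_singleton]
    · rw [if_neg hi, if_neg hi, measure_univ]
  rw [hcyl, Measure.pi_pi, prod_congr rfl fun i _ => hfactor i, prod_ite_mem, univ_inter,
    prod_ite, filter_mem_eq_inter, inter_eq_right.2 hES, prod_const, prod_const, filter_not,
    filter_mem_eq_inter, inter_eq_right.2 hES, card_sdiff_of_subset hES]

end Bernoulli

section Pairs

variable {V : Type*} [DecidableEq V]

def pairsIn (A : Finset V) : Finset (Sym2 V) := A.offDiag.image Sym2.mk.uncurry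

lemma mk_mem_pairsIn {A : Finset V} {u v : V} :
    s(u, v) ∈ pairsIn A ↔ u ∈ A ∧ v ∈ A ∧ u ≠ v := by
  simp only [pairsIn, mem_image, mem_offDiag, Prod.exists, Function.uncurry_apply_pair, Sym2.eq_iff]
  constructor
  · rintro ⟨a, b, ⟨ha, hb, hab⟩, ⟨rfl, rfl⟩ | ⟨rfl, rfl⟩⟩
    exacts [⟨ha, hb, hab⟩, ⟨hb, ha, hab.symm⟩]
  · rintro ⟨hu, hv, huv⟩
    exact ⟨u, v, ⟨hu, hv, huv⟩, Or.inl ⟨rfl, rfl⟩⟩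

lemma card_pairsIn (A : Finset V) : #(pairsIn A) = (#A).choose 2 :=
  Sym2.card_image_offDiag A

lemma pairsIn_inter (A B : Finset V) : pairsIn A ∩ pairsIn B = pairsIn (A ∩ B) := by
  ext e
  induction e using Sym2.ind with
  | _ u v => simp only [mem_inter, mk_mem_pairsIn]; tauto

lemma card_pairsIn_union_add (A B : Finset V) :
    #(pairsIn A ∪ pairsIn B) + (#(A ∩ B)).choose 2 = (#A).choose 2 + (#B).choose 2 := by
  rw [← card_pairsIn, ← card_pairsIn, ← card_pairsIn, ← pairsIn_inter,
    card_union_add_card_inter]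

end Pairs

namespace SimpleGraph

variable {V : Type*} {G : SimpleGraph V}

lemma ConnectedComponent.mk_eq_iff_forall_mem_supp {e : Sym2 V} (he : e ∈ G.edgeSet) {x : V}
    (hx : x ∈ e) (c : G.ConnectedComponent) :
    G.connectedComponentMk x = c ↔ ∀ v ∈ e, v ∈ c.supp := by
  induction e using Sym2.ind with
  | _ u w =>
    have huw : G.connectedComponentMk u = G.connectedComponentMk w :=
      ConnectedComponent.sound (G.mem_edgeSet.1 he).reachable
    simp only [Sym2.mem_iff, forall_eq_or_imp, forall_eq, ConnectedComponent.mem_supp_iff] at hx ⊢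
    rcases hx with rfl | rfl <;> grind

variable [DecidableEq V]

lemma mem_edgeSet_sup_iff_left {TA TB : SimpleGraph V} {A B : Finset V}
    (hTB : ∀ u v, TB.Adj u v → u ∈ B ∧ v ∈ B)
    (hagree : ∀ u ∈ A ∩ B, ∀ v ∈ A ∩ B, (TA.Adj u v ↔ TB.Adj u v))
    {e : Sym2 V} (he : e ∈ pairsIn A) :
    e ∈ (TA ⊔ TB).edgeSet ↔ e ∈ TA.edgeSet := by
  induction e using Sym2.ind with
  | _ u v =>
    obtain ⟨hu, hv, -⟩ := mk_mem_pairsIn.1 he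
    simp only [mem_edgeSet, sup_adj, or_iff_left_iff_imp]
    intro hb
    exact (hagree u (mem_inter.2 ⟨hu, (hTB u v hb).1⟩)
      v (mem_inter.2 ⟨hv, (hTB u v hb).2⟩)).2 hb

variable [Fintype V] [DecidableRel G.Adj]

lemma card_edgeFinset_induce (s : Set V) [DecidablePred (· ∈ s)]
    [Fintype (G.induce s).edgeSet] :
    #(G.induce s).edgeFinset = #{e ∈ G.edgeFinset | ∀ v ∈ e, v ∈ s} := by
  have h := congrArg card (map_edgeFinset_induce (G := G) (s := s))
  rw [card_map, ← filter_mem_eq_inter] at h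
  convert h using 3
  simp only [mem_sym2_iff, Set.mem_toFinset]

theorem IsAcyclic.card_edgeFinset_add_card_connectedComponent (hG : G.IsAcyclic) :
    #G.edgeFinset + Nat.card G.ConnectedComponent = Fintype.card V := by
  have hedges : #G.edgeFinset = ∑ c : G.ConnectedComponent, #(G.induce c.supp).edgeFinset := by
    rw [card_eq_sum_card_fiberwise (f := fun e => G.connectedComponentMk e.out.1)
      (t := univ) fun _ _ => mem_univ _]
    refine sum_congr rfl fun c _ => ?_
    rw [card_edgeFinset_induce]
    exact congrArg card <| filter_congr fun e he =>
      c.mk_eq_iff_forall_mem_supp (mem_edgeFinset.1 he) (Sym2.out_fst_mem e)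
  have hvertices : Fintype.card V = ∑ c : G.ConnectedComponent, Fintype.card c.supp := by
    rw [← card_univ, card_eq_sum_card_fiberwise (f := G.connectedComponentMk) (t := univ)
      fun _ _ => mem_univ _]
    refine sum_congr rfl fun c _ => ?_
    simp [Fintype.card_subtype, ConnectedComponent.mem_supp_iff]
  rw [hedges, hvertices, Nat.card_eq_fintype_card, Fintype.card_eq_sum_ones, ← sum_add_distrib]
  refine sum_congr rfl fun c _ => ?_
  have hc : (G.induce c.supp).IsTree := hG.isTree_connectedComponent c
  convert hc.card_edgeFinset

lemma edgeFinset_subset_pairsIn {T : SimpleGraph V} [DecidableRel T.Adj]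
    {A : Finset V} (hT : ∀ u v, T.Adj u v → u ∈ A ∧ v ∈ A) :
    T.edgeFinset ⊆ pairsIn A := by
  intro e he
  induction e using Sym2.ind with
  | _ u v =>
    have huv := mem_edgeFinset.1 he
    exact mk_mem_pairsIn.2 ⟨(hT u v huv).1, (hT u v huv).2, huv.ne⟩

lemma card_edgeFinset_add_one_of_isTree_induce {T : SimpleGraph V} [DecidableRel T.Adj]
    {A : Finset V} (hT : ∀ u v, T.Adj u v → u ∈ A ∧ v ∈ A)
    (htree : (T.induce (A : Set V)).IsTree) :
    #T.edgeFinset + 1 = #A := by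
  have h := htree.card_edgeFinset
  rw [card_edgeFinset_induce, filter_true_of_mem, ← Nat.card_eq_fintype_card,
    Nat.card_coe_set_eq, Set.ncard_coe_finset] at h
  · exact h
  · intro e he v hv
    induction e using Sym2.ind with
    | _ a b =>
      have hab := hT a b (mem_edgeFinset.1 he)
      rcases Sym2.mem_iff.1 hv with rfl | rfl
      exacts [hab.1, hab.2]

lemma card_inter_edgeFinset_add_card_connectedComponent {TA TB : SimpleGraph V}
    [DecidableRel TA.Adj] [DecidableRel TB.Adj] {A B : Finset V}
    (hTA : ∀ u v, TA.Adj u v → u ∈ A ∧ v ∈ A)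
    (hTB : ∀ u v, TB.Adj u v → u ∈ B ∧ v ∈ B)
    (hagree : ∀ u ∈ A ∩ B, ∀ v ∈ A ∩ B, (TA.Adj u v ↔ TB.Adj u v))
    (hacyc : (TA.induce (A : Set V)).IsAcyclic) :
    #(TA.edgeFinset ∩ TB.edgeFinset) +
      Nat.card (TA.induce ((A ∩ B : Finset V) : Set V)).ConnectedComponent = #(A ∩ B) := by
  have hforest : (TA.induce ((A ∩ B : Finset V) : Set V)).IsAcyclic :=
    hacyc.embedding (induceHomOfLE _ (coe_subset.2 inter_subset_left))
  have hcommon : TA.edgeFinset ∩ TB.edgeFinset =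
      {e ∈ TA.edgeFinset | ∀ v ∈ e, v ∈ ((A ∩ B : Finset V) : Set V)} := by
    ext e
    induction e using Sym2.ind with
    | _ u v =>
      simp only [mem_inter, mem_filter, mem_edgeFinset, mem_edgeSet, Sym2.mem_iff,
        forall_eq_or_imp, forall_eq, mem_coe]
      constructor
      · rintro ⟨ha, hb⟩
        exact ⟨ha, ⟨(hTA u v ha).1, (hTB u v hb).1⟩, ⟨(hTA u v ha).2, (hTB u v hb).2⟩⟩
      · rintro ⟨ha, hu, hv⟩
        exact ⟨ha, (hagree u (mem_inter.2 hu) v (mem_inter.2 hv)).1 ha⟩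
  have h := hforest.card_edgeFinset_add_card_connectedComponent
  rw [card_edgeFinset_induce, ← Nat.card_eq_fintype_card, Nat.card_coe_set_eq,
    Set.ncard_coe_finset] at h
  rwa [hcommon]

end SimpleGraph

section RandomGraph

variable {n : ℕ}

lemma inducedEq_graphOf_iff (ω : Sym2 (Fin n) → Bool) (T : SimpleGraph (Fin n))
    (A : Finset (Fin n)) :
    inducedEq (graphOf ω) T A ↔ ∀ e ∈ pairsIn A, ω e = decide (e ∈ T.edgeFinset) := by
  constructor
  · intro h e he
    induction e using Sym2.ind with
    | _ u v =>
      obtain ⟨hu, hv, huv⟩ := mk_mem_pairsIn.1 he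
      have huv' := h u hu v hv
      simp only [graphOf, ne_eq, huv, not_false_eq_true, true_and] at huv'
      rw [Bool.eq_iff_iff, decide_eq_true_iff, SimpleGraph.mem_edgeFinset]
      exact huv'
  · intro h u hu v hv
    by_cases huv : u = v
    · subst huv
      exact iff_of_false (fun h => h.1 rfl) T.irrefl
    · simp [graphOf, huv, h s(u, v) (mk_mem_pairsIn.2 ⟨hu, hv, huv⟩)]

lemma setOf_inducedEq_and_inducedEq {TA TB : SimpleGraph (Fin n)} {A B : Finset (Fin n)}
    (hTA : ∀ u v, TA.Adj u v → u ∈ A ∧ v ∈ A)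
    (hTB : ∀ u v, TB.Adj u v → u ∈ B ∧ v ∈ B)
    (hagree : ∀ u ∈ A ∩ B, ∀ v ∈ A ∩ B, (TA.Adj u v ↔ TB.Adj u v)) :
    {ω | inducedEq (graphOf ω) TA A ∧ inducedEq (graphOf ω) TB B} =
      {ω | ∀ e ∈ pairsIn A ∪ pairsIn B, ω e = decide (e ∈ (TA ⊔ TB).edgeFinset)} := by
  have hagree' : ∀ u ∈ B ∩ A, ∀ v ∈ B ∩ A, (TB.Adj u v ↔ TA.Adj u v) :=
    fun u hu v hv => (hagree u (inter_comm B A ▸ hu) v (inter_comm B A ▸ hv)).symm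
  ext ω
  simp only [Set.mem_ofPred_eq, inducedEq_graphOf_iff, mem_union, or_imp, forall_and]
  refine and_congr (forall₂_congr fun e he => ?_) (forall₂_congr fun e he => ?_)
  · simp only [SimpleGraph.mem_edgeFinset, SimpleGraph.mem_edgeSet_sup_iff_left hTB hagree he]
  · simp only [SimpleGraph.mem_edgeFinset, sup_comm TA TB,
      SimpleGraph.mem_edgeSet_sup_iff_left hTA hagree' he]

end RandomGraph

lemma ofReal_div_one_sub_pow_mul_pow {p : ℝ} (hp0 : 0 ≤ p) (hp1 : p < 1) {t N : ℕ}
    (htN : t ≤ N) :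
    ENNReal.ofReal ((p / (1 - p)) ^ t * (1 - p) ^ N) =
      ENNReal.ofReal p ^ t * ENNReal.ofReal (1 - p) ^ (N - t) := by
  have hq : 0 < 1 - p := sub_pos.2 hp1
  have hreal : (p / (1 - p)) ^ t * (1 - p) ^ N = p ^ t * (1 - p) ^ (N - t) := by
    rw [← Nat.add_sub_of_le htN, pow_add, Nat.add_sub_cancel_left, div_pow]
    field_simp
  rw [hreal, ENNReal.ofReal_mul (by positivity), ENNReal.ofReal_pow hp0, ENNReal.ofReal_pow hq.le]

theorem pair_probability_formula_general
    (n k ℓ m : ℕ) (p : ℝ) (hp : p ∈ Set.Ioo (0 : ℝ) 1)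
    (A B : Finset (Fin n)) (hA : A.card = k) (hB : B.card = k)
    (hl : (A ∩ B).card = ℓ)
    (TA TB : SimpleGraph (Fin n))
    (hTAe : ∀ u v, TA.Adj u v → u ∈ A ∧ v ∈ A)
    (hTAt : (TA.induce (A : Set (Fin n))).IsTree)
    (hTBe : ∀ u v, TB.Adj u v → u ∈ B ∧ v ∈ B)
    (hTBt : (TB.induce (B : Set (Fin n))).IsTree)
    (hagree : ∀ u ∈ A ∩ B, ∀ v ∈ A ∩ B, (TA.Adj u v ↔ TB.Adj u v))
    (hm : Nat.card (TA.induce ((A ∩ B : Finset (Fin n)) : Set (Fin n))).ConnectedComponent = m) :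
    gnp n p {ω | inducedEq (graphOf ω) TA A ∧ inducedEq (graphOf ω) TB B} =
      ENNReal.ofReal ((p / (1 - p)) ^ (2 * k - ℓ + m - 2) *
        (1 - p) ^ (k * (k - 1) - ℓ * (ℓ - 1) / 2)) := by
  obtain ⟨hp0, hp1⟩ := hp
  have hsub : (TA ⊔ TB).edgeFinset ⊆ pairsIn A ∪ pairsIn B := by
    rw [SimpleGraph.edgeFinset_sup]
    exact union_subset_union (SimpleGraph.edgeFinset_subset_pairsIn hTAe)
      (SimpleGraph.edgeFinset_subset_pairsIn hTBe)
  have hedges : #(TA ⊔ TB).edgeFinset = 2 * k - ℓ + m - 2 := by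
    have hTA := SimpleGraph.card_edgeFinset_add_one_of_isTree_induce hTAe hTAt
    have hTB := SimpleGraph.card_edgeFinset_add_one_of_isTree_induce hTBe hTBt
    have hcommon := SimpleGraph.card_inter_edgeFinset_add_card_connectedComponent hTAe hTBe
      hagree hTAt.isAcyclic
    have hunion := card_union_add_card_inter TA.edgeFinset TB.edgeFinset
    have hℓk : #(A ∩ B) ≤ #A := card_le_card inter_subset_left
    rw [SimpleGraph.edgeFinset_sup]
    omega
  have hpairs : #(pairsIn A ∪ pairsIn B) = k * (k - 1) - ℓ * (ℓ - 1) / 2 := by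
    have h := card_pairsIn_union_add A B
    rw [hA, hB, hl, Nat.choose_two_right, Nat.choose_two_right] at h
    have := Nat.div_two_mul_two_of_even (Nat.even_mul_pred_self k)
    omega
  rw [gnp, setOf_inducedEq_and_inducedEq hTAe hTBe hagree,
    measure_pi_bern_eq_decide_mem hp0.le hp1.le hsub, hedges, hpairs,
    ofReal_div_one_sub_pow_mul_pow hp0.le hp1 (hedges ▸ hpairs ▸ card_le_card hsub)]

theorem pair_probability_formula
    (n k ℓ m : ℕ) (hk : 2 ≤ k) (hkn : k ≤ n) (p : ℝ) (hp : p ∈ Set.Ioo (0 : ℝ) 1)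
    (A B : Finset (Fin n)) (hA : A.card = k) (hB : B.card = k)
    (hl : (A ∩ B).card = ℓ) (hl1 : 1 ≤ ℓ) (hl2 : ℓ ≤ k - 1)
    (TA TB : SimpleGraph (Fin n))
    (hTAe : ∀ u v, TA.Adj u v → u ∈ A ∧ v ∈ A)
    (hTAt : (TA.induce (A : Set (Fin n))).IsTree)
    (hTBe : ∀ u v, TB.Adj u v → u ∈ B ∧ v ∈ B)
    (hTBt : (TB.induce (B : Set (Fin n))).IsTree)
    (hagree : ∀ u ∈ A ∩ B, ∀ v ∈ A ∩ B, (TA.Adj u v ↔ TB.Adj u v))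
    (hm : Nat.card (TA.induce ((A ∩ B : Finset (Fin n)) : Set (Fin n))).ConnectedComponent = m) :
    gnp n p {ω | inducedEq (graphOf ω) TA A ∧ inducedEq (graphOf ω) TB B} =
      ENNReal.ofReal ((p / (1 - p)) ^ (2 * k - ℓ + m - 2) *
        (1 - p) ^ (k * (k - 1) - ℓ * (ℓ - 1) / 2)) :=
  pair_probability_formula_general n k ℓ m p hp A B hA hB hl TA TB hTAe hTAt hTBe hTBt hagree hm
end

section
/- For every integer ℓ ≥ 2, Σ_{j=1}^{ℓ−1} (j·(ℓ−j))^{−1/2} ≤ π. -/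
/-!
The function `f x = (x (ℓ - x))^(-1/2)` is convex on `(0, ℓ)` and has antiderivative
`F x = arcsin ((2x - ℓ) / ℓ)`. By the midpoint (Hermite–Hadamard) inequality,
`f j ≤ F (j + 1/2) - F (j - 1/2)`, so the sum telescopes to at most
`F (ℓ - 1/2) - F (1/2) ≤ π/2 - (-π/2) = π`.
-/

open Real Set Finset

/-- Left Hermite–Hadamard inequality `2δ F'(a) ≤ ∫_{a-δ}^{a+δ} F'`, with the integral given by an
antiderivative `F`. -/
theorem two_mul_mul_le_sub_of_midpoint_le {F F' : ℝ → ℝ} {a δ : ℝ} (hδ : 0 ≤ δ)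
    (hF : ContinuousOn F (Icc (a - δ) (a + δ)))
    (hF' : ∀ x ∈ Ioo (a - δ) (a + δ), HasDerivAt F (F' x) x)
    (hmid : ∀ t ∈ Ioo 0 δ, 2 * F' a ≤ F' (a + t) + F' (a - t)) :
    2 * δ * F' a ≤ F (a + δ) - F (a - δ) := by
  set g : ℝ → ℝ := fun t ↦ F (a + t) - F (a - t) - 2 * F' a * t
  have hg_cont : ContinuousOn g (Icc 0 δ) := by
    have hplus : MapsTo (a + ·) (Icc 0 δ) (Icc (a - δ) (a + δ)) :=
      fun t ⟨h0, h1⟩ ↦ ⟨by linarith, by linarith⟩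
    have hminus : MapsTo (a - ·) (Icc 0 δ) (Icc (a - δ) (a + δ)) :=
      fun t ⟨h0, h1⟩ ↦ ⟨by linarith, by linarith⟩
    exact ((hF.comp (by fun_prop) hplus).sub (hF.comp (by fun_prop) hminus)).sub
      (by fun_prop)
  set g' : ℝ → ℝ := fun t ↦ F' (a + t) + F' (a - t) - 2 * F' a
  have hg_deriv : ∀ t ∈ Ioo 0 δ, HasDerivAt g (g' t) t := by
    rintro t ⟨h0, h1⟩
    have hplus := (hF' (a + t) ⟨by linarith, by linarith⟩).comp t
      ((hasDerivAt_id t).const_add a)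
    have hminus := (hF' (a - t) ⟨by linarith, by linarith⟩).comp t
      ((hasDerivAt_id t).const_sub a)
    exact ((hplus.sub hminus).sub ((hasDerivAt_id t).const_mul (2 * F' a))).congr_deriv
      (by ring)
  have hg_mono : MonotoneOn g (Icc 0 δ) := by
    refine monotoneOn_of_hasDerivWithinAt_nonneg (f' := g') (convex_Icc 0 δ) hg_cont
      (fun t ht ↦ ?_) (fun t ht ↦ ?_)
    · rw [interior_Icc] at ht ⊢
      exact (hg_deriv t ht).hasDerivWithinAt
    · rw [interior_Icc] at ht
      linarith [hmid t ht]
  have := hg_mono (left_mem_Icc.2 hδ) (right_mem_Icc.2 hδ) hδ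
  simp only [g, add_zero, sub_zero, sub_self, mul_zero] at this
  linarith

theorem two_div_le_inv_add_inv_of_mul_le_sq {a b c : ℝ} (ha : 0 < a) (hb : 0 < b) (hc : 0 < c)
    (habc : a * b ≤ c ^ 2) : 2 / c ≤ a⁻¹ + b⁻¹ := by
  rw [inv_add_inv ha.ne' hb.ne', div_le_div_iff₀ hc (mul_pos ha hb)]
  -- `(a + b) c ≥ 2√(ab) · √(ab)` by AM–GM and `c ≥ √(ab)`
  nlinarith [sq_nonneg (a - b), mul_pos ha hb, mul_pos (mul_pos ha hb) hc]

theorem two_mul_inv_sqrt_mul_sub_le {ℓ x t : ℝ} (ht : 0 ≤ t) (hxt : t < x) (hxℓ : x + t < ℓ) :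
    2 * (√(x * (ℓ - x)))⁻¹ ≤
      (√((x + t) * (ℓ - (x + t))))⁻¹ + (√((x - t) * (ℓ - (x - t))))⁻¹ := by
  have hprod : (x + t) * (ℓ - (x + t)) * ((x - t) * (ℓ - (x - t))) ≤ (x * (ℓ - x)) ^ 2 := by
    nlinarith [mul_nonneg (sq_nonneg t) (sub_nonneg.2 (pow_le_pow_left₀ ht hxt.le 2)),
      mul_nonneg (sq_nonneg t) (sq_nonneg (ℓ - x))]
  have hplus : 0 < (x + t) * (ℓ - (x + t)) := mul_pos (by linarith) (by linarith)
  have hminus : 0 < (x - t) * (ℓ - (x - t)) := mul_pos (by linarith) (by linarith)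
  have hcenter : 0 < x * (ℓ - x) := mul_pos (by linarith) (by linarith)
  rw [← div_eq_mul_inv]
  refine two_div_le_inv_add_inv_of_mul_le_sq (sqrt_pos.2 hplus) (sqrt_pos.2 hminus)
    (sqrt_pos.2 hcenter) ?_
  rw [← sqrt_mul hplus.le, sq_sqrt hcenter.le]
  calc _ ≤ √((x * (ℓ - x)) ^ 2) := sqrt_le_sqrt hprod
    _ = _ := sqrt_sq hcenter.le

theorem hasDerivAt_arcsin_two_mul_sub_div {ℓ x : ℝ} (hx : 0 < x) (hxℓ : x < ℓ) :
    HasDerivAt (fun y ↦ arcsin ((2 * y - ℓ) / ℓ)) (√(x * (ℓ - x)))⁻¹ x := by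
  have hℓ : 0 < ℓ := hx.trans hxℓ
  have hlt : ((2 * x - ℓ) / ℓ) ^ 2 < 1 := by
    rw [div_pow, div_lt_one (by positivity)]
    nlinarith
  have hsqrt : √(1 - ((2 * x - ℓ) / ℓ) ^ 2) = 2 * √(x * (ℓ - x)) / ℓ := by
    rw [show 1 - ((2 * x - ℓ) / ℓ) ^ 2 = 2 ^ 2 * (x * (ℓ - x)) / ℓ ^ 2 by field_simp; ring,
      sqrt_div' _ (by positivity), sqrt_mul (by positivity), sqrt_sq hℓ.le, sqrt_sq zero_le_two]
  have hinner : HasDerivAt (fun y ↦ (2 * y - ℓ) / ℓ) (2 / ℓ) x := by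
    simpa using (((hasDerivAt_id x).const_mul 2).sub_const ℓ).div_const ℓ
  refine ((hasDerivAt_arcsin (by nlinarith) (by nlinarith)).comp x hinner).congr_deriv ?_
  have : 0 < √(x * (ℓ - x)) := sqrt_pos.2 (by nlinarith)
  rw [hsqrt]
  field_simp

theorem two_mul_mul_inv_sqrt_le_arcsin_sub {ℓ x δ : ℝ} (hδ : 0 < δ) (hx : δ ≤ x)
    (hxℓ : x + δ ≤ ℓ) :
    2 * δ * (√(x * (ℓ - x)))⁻¹ ≤
      arcsin ((2 * (x + δ) - ℓ) / ℓ) - arcsin ((2 * (x - δ) - ℓ) / ℓ) := by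
  refine two_mul_mul_le_sub_of_midpoint_le (F := fun y ↦ arcsin ((2 * y - ℓ) / ℓ))
    (F' := fun y ↦ (√(y * (ℓ - y)))⁻¹) hδ.le (by fun_prop) ?_ ?_
  · rintro y ⟨h0, h1⟩
    exact hasDerivAt_arcsin_two_mul_sub_div (by linarith) (by linarith)
  · rintro t ⟨h0, h1⟩
    exact two_mul_inv_sqrt_mul_sub_le h0.le (by linarith) (by linarith)

theorem riemann_sum_le_pi_general (ℓ : ℕ) :
    ∑ j ∈ Finset.Icc 1 (ℓ - 1), ((j : ℝ) * ((ℓ : ℝ) - (j : ℝ))) ^ (-(1 / 2) : ℝ) ≤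
      Real.pi := by
  set G : ℕ → ℝ := fun i ↦ arcsin ((2 * ((i : ℝ) - 1 / 2) - ℓ) / ℓ)
  have hterm : ∀ j ∈ Finset.Icc 1 (ℓ - 1),
      ((j : ℝ) * ((ℓ : ℝ) - (j : ℝ))) ^ (-(1 / 2) : ℝ) ≤ G (j + 1) - G j := by
    intro j hj
    obtain ⟨hj_ge, hj_le⟩ := Finset.mem_Icc.1 hj
    have hj1 : (1 : ℝ) ≤ j := by exact_mod_cast hj_ge
    have hjℓ : (j : ℝ) + 1 ≤ ℓ := by exact_mod_cast (by omega : j + 1 ≤ ℓ)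
    have := two_mul_mul_inv_sqrt_le_arcsin_sub (ℓ := ℓ) (x := j) one_half_pos
      (by linarith) (by linarith)
    rw [rpow_neg (by nlinarith), ← sqrt_eq_rpow]
    simp only [G, Nat.cast_add, Nat.cast_one]
    convert this using 3 <;> ring
  calc _ ≤ ∑ j ∈ Finset.Icc 1 (ℓ - 1), (G (j + 1) - G j) := Finset.sum_le_sum hterm
    _ ≤ π / 2 - -(π / 2) := by
        rcases Nat.lt_or_ge ℓ 2 with hℓ | hℓ
        · rw [Finset.Icc_eq_empty (by omega), Finset.sum_empty]
          linarith [pi_pos]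
        rw [Finset.sum_Icc_sub (by omega)]
        exact sub_le_sub (arcsin_le_pi_div_two _) (neg_pi_div_two_le_arcsin _)
    _ = π := by ring

theorem riemann_sum_le_pi (ℓ : ℕ) (hl : 2 ≤ ℓ) :
    ∑ j ∈ Finset.Icc 1 (ℓ - 1), ((j : ℝ) * ((ℓ : ℝ) - (j : ℝ))) ^ (-(1 / 2) : ℝ) ≤
      Real.pi :=
  riemann_sum_le_pi_general ℓ
end
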